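/- arXiv:1607.05310 — 9 statements merged into one kernel-verified Lean document; each statement's English description precedes it below -/
import Mathlib

section
/- Let G be a group acting on the real line by order-preserving homeomorphisms such that no two elements of G are crossed. Assume there exists T ∈ G with T(x) ≠ x for all x ∈ ℝ. Then there exists a nonzero Radon measure μ on ℝ that is invariant under G, i.e., g_*μ = μ for all g ∈ G, where g_*μ(B) = μ(g⁻¹(B)). -/
open MeasureTheory

/-- A Borel measure on ℝ is a Radon measure if it gives finite mass to compact sets. -/
def IsRadon (μ : Measure ℝ) : Prop := ∀ K : Set ℝ, IsCompact K → μ K < ⊤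

/-- Two order-preserving maps `f`, `g` of the line are crossed if there are `a < b` with
`f a = a`, `g b = b`, and `f x < x < g x` for every `x ∈ (a, b)`. -/
def Crossed (f g : ℝ → ℝ) : Prop :=
  ∃ a b : ℝ, a < b ∧ f a = a ∧ g b = b ∧ ∀ x ∈ Set.Ioo a b, f x < x ∧ x < g x

/-!
Without crossings, the elements of `G` having a fixed point are closed under products. Hence
declaring `g ≤ h` when `g⁻¹ * h` does not push every point to the left gives a total preorder on
`G`, invariant under left and right multiplication. An element `f` pushing every point to the right (`T` or
`T⁻¹`) is positive and cofinal for it, so counting the powers of `f` below `g ^ k` and dividing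
by `k` yields a translation number `τ : G → ℝ`, a monotone homomorphism with `τ f = 1`. Then
`Φ x = sup {τ g | g 0 ≤ x}` satisfies `Φ (g x) = τ g + Φ x`, and this survives passing to the
right-continuous version of `Φ`, whose Stieltjes measure is therefore invariant; it is nonzero as
it gives mass `τ f = 1` to `(0, f 0]`.
-/

open Set Filter Topology

namespace OrderIso

variable (e : ℝ ≃o ℝ)

theorem exists_apply_eq_self_mem_uIcc {x y : ℝ} (hx : x ≤ e x) (hy : e y ≤ y) :
    ∃ z ∈ uIcc x y, e z = z := by
  have hcont : ContinuousOn (fun t => e t - t) (uIcc x y) :=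
    (e.toHomeomorph.continuous.sub continuous_id).continuousOn
  obtain ⟨z, hz, hz0⟩ := intermediate_value_uIcc hcont
    (show (0 : ℝ) ∈ uIcc (e x - x) (e y - y) from mem_uIcc.2 (Or.inr ⟨by linarith, by linarith⟩))
  exact ⟨z, hz, sub_eq_zero.1 hz0⟩

theorem forall_lt_apply_or_forall_apply_lt (he : ∀ x, e x ≠ x) :
    (∀ x, x < e x) ∨ ∀ x, e x < x := by
  by_contra! ⟨⟨x, hx⟩, y, hy⟩
  obtain ⟨z, -, hz⟩ := e.exists_apply_eq_self_mem_uIcc hy hx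
  exact he z hz

theorem coe_pow (n : ℕ) : ⇑(e ^ n) = (⇑e)^[n] := by
  induction n with
  | zero => rfl
  | succ n ih => rw [pow_succ', RelIso.coe_mul, ih, Function.iterate_succ']

theorem exists_le_pow_apply (he : ∀ x, x < e x) (y c : ℝ) : ∃ n : ℕ, c ≤ (e ^ n) y := by
  by_contra! hbdd
  simp only [coe_pow] at hbdd
  have hmono : Monotone fun n => (⇑e)^[n] y :=
    monotone_nat_of_le_succ fun n => by
      rw [Function.iterate_succ_apply']; exact (he _).le
  have hlim := tendsto_atTop_ciSup hmono ⟨c, by rintro _ ⟨n, rfl⟩; exact (hbdd n).le⟩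
  exact (he _).ne' (isFixedPt_of_tendsto_iterate hlim e.continuous.continuousAt)

theorem exists_fixed_forall_lt_apply_Ioc {a b : ℝ} (ha : e a = a) (hab : a ≤ b)
    (hb : b < e b) : ∃ p ∈ Ico a b, e p = p ∧ ∀ x ∈ Ioc p b, x < e x := by
  obtain ⟨p, ⟨hpI, hp⟩, hmax⟩ := (isCompact_Icc.inter_right (isClosed_eq e.continuous
    continuous_id)).exists_isGreatest ⟨a, ⟨le_rfl, hab⟩, ha⟩
  refine ⟨p, ⟨hpI.1, hpI.2.lt_of_ne fun hpb => hb.ne' (hpb ▸ hp)⟩, hp, fun x hx => ?_⟩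
  by_contra! hxe
  obtain ⟨z, hz, hez⟩ := e.exists_apply_eq_self_mem_uIcc hb.le hxe
  rw [uIcc_of_ge hx.2] at hz
  exact (hmax ⟨⟨hpI.1.trans (hx.1.le.trans hz.1), hz.2⟩, hez⟩).not_gt (hx.1.trans_le hz.1)

theorem exists_fixed_forall_lt_apply_Ico {a b : ℝ} (ha : e a = a) (hba : b ≤ a)
    (hb : b < e b) : ∃ p ∈ Ioc b a, e p = p ∧ ∀ x ∈ Ico b p, x < e x := by
  obtain ⟨p, ⟨hpI, hp⟩, hmin⟩ := (isCompact_Icc.inter_right (isClosed_eq e.continuous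
    continuous_id)).exists_isLeast ⟨a, ⟨hba, le_rfl⟩, ha⟩
  refine ⟨p, ⟨hpI.1.lt_of_ne fun hbp => hb.ne' (hbp ▸ hp), hpI.2⟩, hp, fun x hx => ?_⟩
  by_contra! hxe
  obtain ⟨z, hz, hez⟩ := e.exists_apply_eq_self_mem_uIcc hb.le hxe
  rw [uIcc_of_le hx.1] at hz
  exact (hmin ⟨⟨hz.1, (hz.2.trans hx.2.le).trans hpI.2⟩, hez⟩).not_gt (hz.2.trans_lt hx.2)

theorem exists_apply_eq_self_of_le_apply {x : ℝ} (hx : x ≤ e x) (he : ¬ ∀ y, y < e y) :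
    ∃ z, e z = z := by
  obtain ⟨y, hy⟩ := not_forall.1 he
  obtain ⟨z, -, hz⟩ := e.exists_apply_eq_self_mem_uIcc hx (not_lt.1 hy)
  exact ⟨z, hz⟩

theorem lt_apply_of_apply_eq_self {g h : ℝ ≃o ℝ} {p : ℝ} (hp : g p = p)
    (H : ∀ x, x < g (h x)) : p < h p :=
  lt_of_not_ge fun hle => (H p).not_ge ((g.monotone hle).trans_eq hp)

theorem crossed_of_forall_lt_mul_apply {g h : ℝ ≃o ℝ} {a b : ℝ} (ha : g a = a) (hb : h b = b)
    (H : ∀ x, x < g (h x)) : Crossed ⇑g⁻¹ ⇑h ∨ Crossed ⇑h⁻¹ ⇑g := by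
  -- The fixed point `p` of `g` closest to `b` on the side of `a`, and then the fixed point `q`
  -- of `h` closest to `p` on the side of `b`, bound an interval on which `g⁻¹` and `h` cross.
  have hgb : b < g b := by simpa [hb] using H b
  have inv_lt {x : ℝ} (e : ℝ ≃o ℝ) (hx : x < e x) : e⁻¹ x < x := by
    simpa using e⁻¹.strictMono hx
  rcases le_total a b with hab | hba
  · obtain ⟨p, hpI, hp, hgp⟩ := g.exists_fixed_forall_lt_apply_Ioc ha hab hgb
    obtain ⟨q, hqI, hq, hhq⟩ :=
      h.exists_fixed_forall_lt_apply_Ico hb hpI.2.le (lt_apply_of_apply_eq_self hp H)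
    refine Or.inl ⟨p, q, hqI.1, g.symm_apply_eq.2 hp.symm, hq, fun x hx => ?_⟩
    exact ⟨inv_lt g (hgp x ⟨hx.1, hx.2.le.trans hqI.2⟩), hhq x ⟨hx.1.le, hx.2⟩⟩
  · obtain ⟨p, hpI, hp, hgp⟩ := g.exists_fixed_forall_lt_apply_Ico ha hba hgb
    obtain ⟨q, hqI, hq, hhq⟩ :=
      h.exists_fixed_forall_lt_apply_Ioc hb hpI.1.le (lt_apply_of_apply_eq_self hp H)
    refine Or.inr ⟨q, p, hqI.2, h.symm_apply_eq.2 hq.symm, hp, fun x hx => ?_⟩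
    exact ⟨inv_lt h (hhq x ⟨hx.1, hx.2.le⟩), hgp x ⟨hqI.1.trans hx.1.le, hx.2⟩⟩

end OrderIso

theorem exists_tendsto_div_of_superadditive {u : ℕ → ℝ} (hu : ∀ m n, u m + u n ≤ u (m + n))
    {C : ℝ} (hC : ∀ n, u n ≤ C * n) : ∃ L, Tendsto (fun n => u n / n) atTop (𝓝 L) := by
  have hsub : Subadditive (-u) := fun m n => by simp only [Pi.neg_apply]; linarith [hu m n]
  have hbdd : BddBelow (range fun n => (-u) n / n) := by
    refine ⟨-|C|, ?_⟩
    rintro _ ⟨n, rfl⟩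
    rcases n.eq_zero_or_pos with rfl | hn
    · simp
    · rw [le_div_iff₀ (by exact_mod_cast hn), Pi.neg_apply]
      linarith [hC n, mul_le_mul_of_nonneg_right (le_abs_self C) n.cast_nonneg]
  exact ⟨-hsub.lim, by simpa [neg_div] using (hsub.tendsto_lim hbdd).neg⟩

theorem tendsto_div_of_abs_sub_le {u v : ℕ → ℝ} {L : ℝ}
    (hu : Tendsto (fun n => u n / n) atTop (𝓝 L)) {C : ℝ} (huv : ∀ n, |v n - u n| ≤ C) :
    Tendsto (fun n => v n / n) atTop (𝓝 L) := by
  have hdiff : Tendsto (fun n : ℕ => (v n - u n) / n) atTop (𝓝 0) :=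
    squeeze_zero_norm (fun n => by
      rw [Real.norm_eq_abs, abs_div, Nat.abs_cast]
      exact div_le_div_of_nonneg_right (huv n) n.cast_nonneg)
      (tendsto_const_div_atTop_nhds_zero_nat C)
  simpa [sub_div] using hu.add hdiff

section OrderedGroup

variable {G : Type*} [Group G] [Preorder G] [MulLeftMono G] [MulRightMono G]

theorem pow_mul_pow_le_mul_pow_of_mul_le {x y : G} (h : x * y ≤ y * x) (k : ℕ) :
    x ^ k * y ^ k ≤ (x * y) ^ k := by
  induction k with
  | zero => simp
  | succ k ih =>
    calc x ^ (k + 1) * y ^ (k + 1) = x * (x ^ k * y ^ k) * y := by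
          rw [pow_succ', pow_succ, mul_assoc, mul_assoc, mul_assoc]
      _ ≤ x * (y * x) ^ k * y := by gcongr; exact ih.trans (pow_le_pow_left' h k)
      _ = (x * y) ^ (k + 1) := by rw [← mul_pow_mul, pow_succ, mul_assoc]

theorem mul_pow_le_pow_mul_pow_of_mul_le {x y : G} (h : x * y ≤ y * x) (k : ℕ) :
    (y * x) ^ k ≤ y ^ k * x ^ k := by
  induction k with
  | zero => simp
  | succ k ih =>
    calc (y * x) ^ (k + 1) = y * (x * y) ^ k * x := by rw [← mul_pow_mul, pow_succ, mul_assoc]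
      _ ≤ y * (y ^ k * x ^ k) * x := by gcongr; exact (pow_le_pow_left' h k).trans ih
      _ = y ^ (k + 1) * x ^ (k + 1) := by
          rw [pow_succ', pow_succ, mul_assoc, mul_assoc, mul_assoc]

variable {f : G}

theorem zpow_le_zpow_iff_of_one_lt (hf : 1 < f) {m n : ℤ} : f ^ m ≤ f ^ n ↔ m ≤ n := by
  constructor
  · intro hmn
    by_contra! hnm
    have h1 : f ≤ f ^ (m - n) :=
      calc f ≤ f ^ (m - n - 1) * f := le_mul_of_one_le_left' (one_le_zpow hf.le (by omega))
        _ = f ^ (m - n) := by rw [← zpow_add_one, sub_add_cancel]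
    have hle : f ^ n * f ^ (m - n) ≤ f ^ n := by rwa [← zpow_add, add_sub_cancel]
    exact hf.not_ge (h1.trans ((mul_le_iff_le_one_right' _).1 hle))
  · intro hmn
    calc f ^ m ≤ f ^ m * f ^ (n - m) := le_mul_of_one_le_right' (one_le_zpow hf.le (by omega))
      _ = f ^ n := by rw [← zpow_add, add_sub_cancel]

variable (f) in
/-- The largest `n` with `f ^ n ≤ g`. The set is nonempty and bounded above when `1 < f` and the
powers of `f` are cofinal; otherwise `sSup` returns a junk value. -/
noncomputable def powFloor (g : G) : ℤ := sSup {n : ℤ | f ^ n ≤ g}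

variable (f) in
noncomputable def translationNumber (g : G) : ℝ :=
  limUnder atTop fun k : ℕ => (powFloor f (g ^ k) : ℝ) / k

variable (hf : 1 < f) (hcof : ∀ g : G, ∃ n : ℕ, g ≤ f ^ n)
include hf hcof

theorem le_powFloor_iff {g : G} {n : ℤ} : n ≤ powFloor f g ↔ f ^ n ≤ g := by
  have hne : {n : ℤ | f ^ n ≤ g}.Nonempty := by
    obtain ⟨N, hN⟩ := hcof g⁻¹
    exact ⟨-N, by simpa using inv_le_of_inv_le' hN⟩
  have hbdd : BddAbove {n : ℤ | f ^ n ≤ g} := by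
    obtain ⟨N, hN⟩ := hcof g
    exact ⟨N, fun n hn => (zpow_le_zpow_iff_of_one_lt hf).1 (by simpa using hn.trans hN)⟩
  refine ⟨fun hn => ?_, fun hn => le_csSup hbdd hn⟩
  exact ((zpow_le_zpow_iff_of_one_lt hf).2 hn).trans (Int.csSup_mem hne hbdd)

theorem zpow_powFloor_le (g : G) : f ^ powFloor f g ≤ g :=
  (le_powFloor_iff hf hcof).1 le_rfl

theorem powFloor_mono : Monotone (powFloor f) := fun g _ hgh =>
  (le_powFloor_iff hf hcof).2 ((zpow_powFloor_le hf hcof g).trans hgh)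

theorem powFloor_zpow (n : ℤ) : powFloor f (f ^ n) = n :=
  le_antisymm ((zpow_le_zpow_iff_of_one_lt hf).1 (zpow_powFloor_le hf hcof _))
    ((le_powFloor_iff hf hcof).2 le_rfl)

theorem powFloor_add_le_powFloor_mul (g h : G) :
    powFloor f g + powFloor f h ≤ powFloor f (g * h) :=
  (le_powFloor_iff hf hcof).2 <| by
    rw [zpow_add]; exact mul_le_mul' (zpow_powFloor_le hf hcof g) (zpow_powFloor_le hf hcof h)

variable [Std.Total (· ≤ · : G → G → Prop)]

theorem le_zpow_powFloor_add_one (g : G) : g ≤ f ^ (powFloor f g + 1) :=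
  (total_of (· ≤ ·) g _).resolve_right fun h => by simpa using (le_powFloor_iff hf hcof).2 h

theorem powFloor_mul_le (g h : G) :
    powFloor f (g * h) ≤ powFloor f g + powFloor f h + 2 :=
  calc powFloor f (g * h)
      ≤ powFloor f (f ^ (powFloor f g + 1) * f ^ (powFloor f h + 1)) :=
        powFloor_mono hf hcof <|
          mul_le_mul' (le_zpow_powFloor_add_one hf hcof g) (le_zpow_powFloor_add_one hf hcof h)
    _ = powFloor f g + powFloor f h + 2 := by
        rw [← zpow_add, powFloor_zpow hf hcof]; ring

theorem tendsto_translationNumber (g : G) :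
    Tendsto (fun k : ℕ => (powFloor f (g ^ k) : ℝ) / k) atTop (𝓝 (translationNumber f g)) := by
  refine tendsto_nhds_limUnder
    (exists_tendsto_div_of_superadditive (C := powFloor f g + 2) (fun m n => ?_) (fun n => ?_))
  · rw [pow_add]; exact_mod_cast powFloor_add_le_powFloor_mul hf hcof _ _
  · have : powFloor f (g ^ n) ≤ (powFloor f g + 2) * n := by
      induction n with
      | zero => simpa using (powFloor_zpow hf hcof 0).le
      | succ n ih => rw [pow_succ]; push_cast; linarith [powFloor_mul_le hf hcof (g ^ n) g]
    exact_mod_cast this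

theorem translationNumber_mono : Monotone (translationNumber f) := fun g h hgh =>
  le_of_tendsto_of_tendsto' (tendsto_translationNumber hf hcof g)
    (tendsto_translationNumber hf hcof h) fun k => div_le_div_of_nonneg_right
      (by exact_mod_cast powFloor_mono hf hcof (pow_le_pow_left' hgh k)) k.cast_nonneg

theorem translationNumber_self : translationNumber f f = 1 := by
  refine tendsto_nhds_unique (tendsto_translationNumber hf hcof f)
    (tendsto_const_nhds.congr' ?_)
  filter_upwards [eventually_ne_atTop 0] with k hk
  rw [← zpow_natCast, powFloor_zpow hf hcof, Int.cast_natCast, div_self (by exact_mod_cast hk)]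

theorem translationNumber_eq_add_of_powFloor_bounds {g h x : G}
    (hlow : ∀ k : ℕ, powFloor f (g ^ k) + powFloor f (h ^ k) ≤ powFloor f (x ^ k))
    (hup : ∀ k : ℕ, powFloor f (x ^ k) ≤ powFloor f (g ^ k) + powFloor f (h ^ k) + 2) :
    translationNumber f x = translationNumber f g + translationNumber f h := by
  have hsum := (tendsto_translationNumber hf hcof g).add (tendsto_translationNumber hf hcof h)
  simp only [← add_div] at hsum
  refine tendsto_nhds_unique (tendsto_translationNumber hf hcof x) <|
    tendsto_div_of_abs_sub_le hsum (C := 2) fun k => ?_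
  have hlow' : ((powFloor f (g ^ k) + powFloor f (h ^ k) : ℤ) : ℝ) ≤ powFloor f (x ^ k) := by
    exact_mod_cast hlow k
  have hup' : (powFloor f (x ^ k) : ℝ) ≤ ((powFloor f (g ^ k) + powFloor f (h ^ k) + 2 : ℤ) : ℝ) :=
    by exact_mod_cast hup k
  push_cast at hlow' hup'
  rw [abs_le]
  constructor <;> linarith

theorem translationNumber_mul_of_mul_le {g h : G} (hgh : g * h ≤ h * g) :
    translationNumber f (g * h) = translationNumber f g + translationNumber f h ∧
      translationNumber f (h * g) = translationNumber f g + translationNumber f h := by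
  -- Both `(g * h) ^ k` and `(h * g) ^ k` lie between `g ^ k * h ^ k` and `h ^ k * g ^ k`.
  have hlow (k : ℕ) : powFloor f (g ^ k) + powFloor f (h ^ k) ≤ powFloor f ((g * h) ^ k) :=
    (powFloor_add_le_powFloor_mul hf hcof _ _).trans
      (powFloor_mono hf hcof (pow_mul_pow_le_mul_pow_of_mul_le hgh k))
  have hmid (k : ℕ) : powFloor f ((g * h) ^ k) ≤ powFloor f ((h * g) ^ k) :=
    powFloor_mono hf hcof (pow_le_pow_left' hgh k)
  have hup (k : ℕ) : powFloor f ((h * g) ^ k) ≤ powFloor f (g ^ k) + powFloor f (h ^ k) + 2 :=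
    (powFloor_mono hf hcof (mul_pow_le_pow_mul_pow_of_mul_le hgh k)).trans <| by
      linarith [powFloor_mul_le hf hcof (h ^ k) (g ^ k)]
  exact ⟨translationNumber_eq_add_of_powFloor_bounds hf hcof hlow fun k => (hmid k).trans (hup k),
    translationNumber_eq_add_of_powFloor_bounds hf hcof (fun k => (hlow k).trans (hmid k)) hup⟩

theorem translationNumber_mul (g h : G) :
    translationNumber f (g * h) = translationNumber f g + translationNumber f h := by
  rcases total_of (· ≤ ·) (g * h) (h * g) with hgh | hhg
  · exact (translationNumber_mul_of_mul_le hf hcof hgh).1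
  · rw [(translationNumber_mul_of_mul_le hf hcof hhg).2, add_comm]

end OrderedGroup

section Action

variable {G : Type*} [Group G] (ρ : G →* (ℝ ≃o ℝ))

theorem apply_inv_eq_self {g : G} {a : ℝ} (ha : ρ g a = a) : ρ g⁻¹ a = a := by
  rw [map_inv]; exact (ρ g).symm_apply_eq.2 ha.symm

theorem not_forall_lt_apply_mul (hnc : ∀ f g : G, ¬ Crossed (ρ f) (ρ g)) {g h : G} {a b : ℝ}
    (ha : ρ g a = a) (hb : ρ h b = b) : ¬ ∀ x, x < ρ (g * h) x := fun H => by
  rcases OrderIso.crossed_of_forall_lt_mul_apply ha hb (by simpa using H) with hc | hc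
  · exact hnc g⁻¹ h (by rwa [map_inv])
  · exact hnc h⁻¹ g (by rwa [map_inv])

theorem exists_apply_mul_eq_self (hnc : ∀ f g : G, ¬ Crossed (ρ f) (ρ g)) {g h : G}
    (hg : ∃ a, ρ g a = a) (hh : ∃ b, ρ h b = b) : ∃ c, ρ (g * h) c = c := by
  obtain ⟨a, ha⟩ := hg
  obtain ⟨b, hb⟩ := hh
  by_contra! hfree
  rcases (ρ (g * h)).forall_lt_apply_or_forall_apply_lt hfree with H | H
  · exact not_forall_lt_apply_mul ρ hnc ha hb H
  · refine not_forall_lt_apply_mul ρ hnc (apply_inv_eq_self ρ hb) (apply_inv_eq_self ρ ha)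
      fun x => ?_
    simpa [← mul_inv_rev] using H (ρ (g * h)⁻¹ x)

theorem exists_le_apply_mul (hnc : ∀ f g : G, ¬ Crossed (ρ f) (ρ g)) {g h : G}
    (hg : ∃ x, x ≤ ρ g x) (hh : ∃ x, x ≤ ρ h x) : ∃ x, x ≤ ρ (g * h) x := by
  obtain ⟨x, hx⟩ := hg
  obtain ⟨y, hy⟩ := hh
  by_cases hg' : ∀ z, z < ρ g z
  · exact ⟨y, by simpa using hy.trans (hg' _).le⟩
  by_cases hh' : ∀ z, z < ρ h z
  · refine ⟨ρ h⁻¹ x, ?_⟩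
    have : ρ h⁻¹ x ≤ x := by simpa using (ρ h⁻¹).monotone (hh' x).le
    simpa using this.trans hx
  obtain ⟨c, hc⟩ := exists_apply_mul_eq_self ρ hnc ((ρ g).exists_apply_eq_self_of_le_apply hx hg')
    ((ρ h).exists_apply_eq_self_of_le_apply hy hh')
  exact ⟨c, hc.ge⟩

abbrev dynamicalPreorder (hnc : ∀ f g : G, ¬ Crossed (ρ f) (ρ g)) : Preorder G where
  le g h := ∃ x, x ≤ ρ (g⁻¹ * h) x
  le_refl g := ⟨0, by simp⟩
  le_trans g h k hgh hhk := by simpa [mul_assoc] using exists_le_apply_mul ρ hnc hgh hhk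

theorem exists_additive_monotone_of_forall_lt_apply (hnc : ∀ f g : G, ¬ Crossed (ρ f) (ρ g))
    {f : G} (hf : ∀ x, x < ρ f x) :
    ∃ τ : G → ℝ, (∀ g h, τ (g * h) = τ g + τ h) ∧ (∀ g h, ρ g 0 ≤ ρ h 0 → τ g ≤ τ h) ∧
      τ f = 1 := by
  let := dynamicalPreorder ρ hnc
  have le_iff {g h : G} : g ≤ h ↔ ∃ x, x ≤ ρ (g⁻¹ * h) x := Iff.rfl
  have : MulLeftMono G := ⟨fun u g h hgh => by simpa [le_iff, mul_assoc] using hgh⟩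
  have : MulRightMono G := ⟨fun u g h hgh => by
    obtain ⟨x, hx⟩ := hgh
    exact ⟨ρ u⁻¹ x, by simpa [mul_assoc] using (ρ u⁻¹).monotone hx⟩⟩
  have : Std.Total (· ≤ · : G → G → Prop) := ⟨fun g h => by
    refine or_iff_not_imp_left.2 fun hgh => ⟨ρ (g⁻¹ * h) 0, ?_⟩
    simp only [le_iff, not_exists, not_le] at hgh
    simpa using (hgh 0).le⟩
  have le_of_apply_zero_le {g h : G} (hgh : ρ g 0 ≤ ρ h 0) : g ≤ h :=
    ⟨0, by simpa using (ρ g⁻¹).monotone hgh⟩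
  have hf1 : 1 < f := lt_of_le_not_ge ⟨0, by simpa using (hf 0).le⟩ fun ⟨x, hx⟩ =>
    (hx.trans_lt (by simpa using (ρ f⁻¹).strictMono (hf x))).false
  have hcof (g : G) : ∃ n : ℕ, g ≤ f ^ n := by
    obtain ⟨n, hn⟩ := (ρ f).exists_le_pow_apply hf 0 (ρ g 0)
    exact ⟨n, le_of_apply_zero_le (by simpa using hn)⟩
  exact ⟨translationNumber f, translationNumber_mul hf1 hcof,
    fun g h hgh => translationNumber_mono hf1 hcof (le_of_apply_zero_le hgh),
    translationNumber_self hf1 hcof⟩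

theorem exists_forall_lt_apply_of_forall_apply_ne {T : G} (hT : ∀ x, ρ T x ≠ x) :
    ∃ f : G, ∀ x, x < ρ f x := by
  rcases (ρ T).forall_lt_apply_or_forall_apply_lt hT with hT' | hT'
  · exact ⟨T, hT'⟩
  · exact ⟨T⁻¹, fun x => by simpa using (ρ T⁻¹).strictMono (hT' x)⟩

theorem exists_le_apply_zero_of_forall_lt_apply {f : G} (hf : ∀ x, x < ρ f x) (x : ℝ) :
    ∃ g, x ≤ ρ g 0 := by
  obtain ⟨n, hn⟩ := (ρ f).exists_le_pow_apply hf 0 x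
  exact ⟨f ^ n, by simpa using hn⟩

theorem exists_apply_zero_le_of_forall_lt_apply {f : G} (hf : ∀ x, x < ρ f x) (x : ℝ) :
    ∃ g, ρ g 0 ≤ x := by
  obtain ⟨n, hn⟩ := (ρ f).exists_le_pow_apply hf x 0
  exact ⟨(f ^ n)⁻¹, by simpa using (ρ (f ^ n)⁻¹).monotone hn⟩

end Action

theorem Monotone.stieltjesFunction_apply_orderIso {φ : ℝ → ℝ} (hφ : Monotone φ) {e : ℝ ≃o ℝ}
    {c : ℝ} (h : ∀ x, φ (e x) = c + φ x) (x : ℝ) :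
    hφ.stieltjesFunction (e x) = c + hφ.stieltjesFunction x := by
  simp only [Monotone.stieltjesFunction_eq]
  have he : Tendsto e.symm (𝓝[>] (e x)) (𝓝[>] x) := by
    simpa using e.symm.continuous.continuousWithinAt.tendsto_nhdsWithin (x := e x)
      (t := Ioi x) fun y hy => by simpa using e.symm.strictMono hy
  refine rightLim_eq_of_tendsto ((((hφ.tendsto_rightLim x).const_add c).comp he).congr
    fun y => ?_)
  simp [← h]

theorem StieltjesFunction.map_measure_of_apply_eq_add (F : StieltjesFunction ℝ) {e : ℝ ≃o ℝ}
    {c : ℝ} (h : ∀ x, F (e x) = c + F x) : F.measure.map e = F.measure := by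
  refine (Measure.ext_of_Ioc _ _ fun a b _ => ?_).symm
  rw [Measure.map_apply e.monotone.measurable measurableSet_Ioc, e.preimage_Ioc,
    F.measure_Ioc, F.measure_Ioc]
  have ha := h (e.symm a)
  have hb := h (e.symm b)
  simp only [OrderIso.apply_symm_apply] at ha hb
  congr 1
  linarith

section Semiconjugacy

variable {G : Type*} [Group G] (ρ : G →* (ℝ ≃o ℝ)) (τ : G → ℝ)

noncomputable def translationSemiconj (x : ℝ) : ℝ := sSup (τ '' {g | ρ g 0 ≤ x})

theorem bddAbove_image_setOf_apply_zero_le (hmono : ∀ g h, ρ g 0 ≤ ρ h 0 → τ g ≤ τ h)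
    (hup : ∀ x, ∃ g, x ≤ ρ g 0) (x : ℝ) : BddAbove (τ '' {g | ρ g 0 ≤ x}) := by
  obtain ⟨h, hh⟩ := hup x
  exact ⟨τ h, by rintro _ ⟨g, hg, rfl⟩; exact hmono g h (hg.trans hh)⟩

theorem translationSemiconj_mono (hmono : ∀ g h, ρ g 0 ≤ ρ h 0 → τ g ≤ τ h)
    (hup : ∀ x, ∃ g, x ≤ ρ g 0) (hdown : ∀ x, ∃ g, ρ g 0 ≤ x) :
    Monotone (translationSemiconj ρ τ) := fun x y hxy =>
  csSup_le_csSup (bddAbove_image_setOf_apply_zero_le ρ τ hmono hup y) (Nonempty.image τ (hdown x))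
    (image_mono fun _ hg => le_trans hg hxy)

theorem translationSemiconj_apply (hmul : ∀ g h, τ (g * h) = τ g + τ h)
    (hmono : ∀ g h, ρ g 0 ≤ ρ h 0 → τ g ≤ τ h) (hup : ∀ x, ∃ g, x ≤ ρ g 0)
    (hdown : ∀ x, ∃ g, ρ g 0 ≤ x) (g : G) (x : ℝ) :
    translationSemiconj ρ τ (ρ g x) = τ g + translationSemiconj ρ τ x := by
  have himage : τ '' {h | ρ h 0 ≤ ρ g x} = OrderIso.addLeft (τ g) '' (τ '' {h | ρ h 0 ≤ x}) := by
    rw [image_image]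
    ext t
    constructor
    · rintro ⟨h, hh, rfl⟩
      refine ⟨g⁻¹ * h, ?_, by simp [← hmul]⟩
      simpa using (ρ g⁻¹).monotone hh
    · rintro ⟨h, hh, rfl⟩
      exact ⟨g * h, by simpa using (ρ g).monotone hh, by simp [hmul]⟩
  rw [translationSemiconj, himage]
  exact ((OrderIso.addLeft (τ g)).map_csSup' (Nonempty.image τ (hdown x))
    (bddAbove_image_setOf_apply_zero_le ρ τ hmono hup x)).symm

end Semiconjugacy

/-- If `G` acts on the line by order-preserving homeomorphisms, no two elements of `G`
are crossed, and some `T ∈ G` acts freely, then there is a nonzero Radon measure on ℝ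
invariant under `G`. -/
theorem noCrossed_invariant_measure {G : Type*} [Group G]
    (ρ : G →* (ℝ ≃o ℝ))
    (hnc : ∀ f g : G, ¬ Crossed (⇑(ρ f)) (⇑(ρ g)))
    (T : G) (hT : ∀ x : ℝ, ρ T x ≠ x) :
    ∃ μ : Measure ℝ, μ ≠ 0 ∧ IsRadon μ ∧
      ∀ g : G, Measure.map (⇑(ρ g)) μ = μ := by
  obtain ⟨f, hf⟩ := exists_forall_lt_apply_of_forall_apply_ne ρ hT
  obtain ⟨τ, hmul, hmono, hτf⟩ := exists_additive_monotone_of_forall_lt_apply ρ hnc hf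
  have hup := exists_le_apply_zero_of_forall_lt_apply ρ hf
  have hdown := exists_apply_zero_le_of_forall_lt_apply ρ hf
  set F := (translationSemiconj_mono ρ τ hmono hup hdown).stieltjesFunction
  have hF (g : G) (x : ℝ) : F (ρ g x) = τ g + F x :=
    Monotone.stieltjesFunction_apply_orderIso _
      (translationSemiconj_apply ρ τ hmul hmono hup hdown g) x
  refine ⟨F.measure, fun h0 => ?_, fun K hK => hK.measure_lt_top,
    fun g => F.map_measure_of_apply_eq_add (hF g)⟩
  have hIoc := F.measure_Ioc 0 (ρ f 0)
  rw [h0, hF, hτf] at hIoc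
  simp at hIoc
end

section
/- Let G be a group acting on the real line by order-preserving homeomorphisms. Suppose the action is semi-conjugate to an affine action: there are real numbers a_g > 0 and b_g for each g ∈ G satisfying a_{gh} = a_g·a_h and b_{gh} = a_g·b_h + b_g for all g, h ∈ G, and a non-decreasing map F : ℝ → ℝ whose image is unbounded above and unbounded below, such that F(g(x)) = a_g·F(x) + b_g for all g ∈ G and x ∈ ℝ. Then there exists a nonzero Radon measure μ on ℝ that is quasi-invariant under G: for every g ∈ G there is a real λ_g > 0 such that g_*μ = λ_g·μ, where g_*μ(B) = μ(g⁻¹(B)). -/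
open MeasureTheory

/-!
The right-continuous modification `f = rightLim F` of `F` still satisfies
`f (g x) = a g * f x + b g`, and it is the distribution function of a Stieltjes measure `μ`
with `μ (x, y] = f y - f x`. Pulling back an interval by `g` therefore rescales its mass
by `a g⁻¹`, so `g_* μ = a g⁻¹ • μ`. Since `F` is unbounded, `f` is not constant and `μ ≠ 0`.
-/

open Function Filter Set Topology

section RightLim

variable {α : Type*} [LinearOrder α] [TopologicalSpace α] [OrderTopology α] [DenselyOrdered α]
  [NoMaxOrder α] {F : α → ℝ}

theorem Monotone.rightLim_comp_orderIso (hF : Monotone F) (φ : α ≃o α) (x : α) :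
    rightLim (F ∘ φ) x = rightLim F (φ x) := by
  have hmap : map φ (𝓝[>] x) = 𝓝[>] (φ x) := by
    simpa only [OrderIso.coe_toHomeomorph, φ.image_Ioi] using
      φ.toHomeomorph.isEmbedding.map_nhdsWithin_eq (Ioi x) x
  refine rightLim_eq_of_tendsto ?_
  rw [← tendsto_map'_iff, hmap]
  exact hF.tendsto_rightLim (φ x)

theorem Monotone.rightLim_const_mul_add (hF : Monotone F) (c d : ℝ) (x : α) :
    rightLim (fun t => c * F t + d) x = c * rightLim F x + d :=
  rightLim_eq_of_tendsto (((hF.tendsto_rightLim x).const_mul c).add_const d)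

end RightLim

theorem Monotone.stieltjesFunction_semiconj {F : ℝ → ℝ} (hF : Monotone F) (φ : ℝ ≃o ℝ)
    {c d : ℝ} (h : ∀ x, F (φ x) = c * F x + d) (x : ℝ) :
    hF.stieltjesFunction (φ x) = c * hF.stieltjesFunction x + d := by
  simp only [Monotone.stieltjesFunction_eq, ← hF.rightLim_comp_orderIso,
    ← hF.rightLim_const_mul_add]
  congr 1
  exact funext h

namespace StieltjesFunction

theorem map_measure_eq_smul (f : StieltjesFunction ℝ) (φ : ℝ ≃o ℝ) {c : ℝ} (hc : 0 ≤ c) (d : ℝ)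
    (h : ∀ x, f (φ.symm x) = c * f x + d) :
    Measure.map φ f.measure = ENNReal.ofReal c • f.measure := by
  have hpre : ∀ x y, Measure.map φ f.measure (Ioc x y) = ENNReal.ofReal (c * (f y - f x)) := by
    intro x y
    rw [Measure.map_apply φ.monotone.measurable measurableSet_Ioc, φ.preimage_Ioc,
      f.measure_Ioc, h, h]
    congr 1
    ring
  refine Measure.ext_of_Ioc' _ _ (fun x y _ => hpre x y ▸ ENNReal.ofReal_ne_top) fun x y _ => ?_
  rw [hpre, Measure.smul_apply, f.measure_Ioc, smul_eq_mul, ENNReal.ofReal_mul hc]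

theorem bddAbove_range_of_measure_eq_zero (f : StieltjesFunction ℝ) (h : f.measure = 0) :
    BddAbove (range f) := by
  refine ⟨f 0, forall_mem_range.2 fun x => sub_nonpos.1 (ENNReal.ofReal_eq_zero.1 ?_)⟩
  rw [← f.measure_Ioc, h, Measure.coe_zero, Pi.zero_apply]

end StieltjesFunction

theorem Monotone.stieltjesFunction_measure_ne_zero {F : ℝ → ℝ} (hF : Monotone F)
    (hFabove : ¬ BddAbove (range F)) : hF.stieltjesFunction.measure ≠ 0 := fun h => by
  obtain ⟨M, hM⟩ := hF.stieltjesFunction.bddAbove_range_of_measure_eq_zero h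
  exact hFabove
    ⟨M, forall_mem_range.2 fun x => (hF.le_rightLim le_rfl).trans (hM (mem_range_self x))⟩

theorem semiconjugate_affine_quasiInvariant_measure_general {G : Type*} [Group G]
    (ρ : G →* (ℝ ≃o ℝ))
    (a b : G → ℝ) (ha : ∀ g, 0 < a g)
    (F : ℝ → ℝ) (hF : Monotone F)
    (hFabove : ¬ BddAbove (Set.range F))
    (hsc : ∀ (g : G) (x : ℝ), F (ρ g x) = a g * F x + b g) :
    ∃ μ : Measure ℝ, μ ≠ 0 ∧ IsRadon μ ∧
      ∀ g : G, ∃ lam : ℝ, 0 < lam ∧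
        Measure.map (⇑(ρ g)) μ = ENNReal.ofReal lam • μ := by
  refine ⟨hF.stieltjesFunction.measure, hF.stieltjesFunction_measure_ne_zero hFabove,
    fun K hK => hK.measure_lt_top, fun g => ⟨a g⁻¹, ha g⁻¹, ?_⟩⟩
  refine hF.stieltjesFunction.map_measure_eq_smul (ρ g) (ha g⁻¹).le (b g⁻¹) fun x => ?_
  have hsymm : (ρ g).symm = ρ g⁻¹ := (map_inv ρ g).symm
  rw [hsymm]
  exact hF.stieltjesFunction_semiconj (ρ g⁻¹) (hsc g⁻¹) x

/-- If an action of `G` on the line by order-preserving homeomorphisms is semi-conjugate,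
via a non-decreasing map `F` with image unbounded in both directions, to an affine action
`x ↦ a g * x + b g` (with `a g > 0` and the cocycle identities making it an action), then
there is a nonzero Radon measure on ℝ quasi-invariant under `G`. -/
theorem semiconjugate_affine_quasiInvariant_measure {G : Type*} [Group G]
    (ρ : G →* (ℝ ≃o ℝ))
    (a b : G → ℝ) (ha : ∀ g, 0 < a g)
    (hmul_a : ∀ g h : G, a (g * h) = a g * a h)
    (hmul_b : ∀ g h : G, b (g * h) = a g * b h + b g)
    (F : ℝ → ℝ) (hF : Monotone F)
    (hFabove : ¬ BddAbove (Set.range F)) (hFbelow : ¬ BddBelow (Set.range F))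
    (hsc : ∀ (g : G) (x : ℝ), F (ρ g x) = a g * F x + b g) :
    ∃ μ : Measure ℝ, μ ≠ 0 ∧ IsRadon μ ∧
      ∀ g : G, ∃ lam : ℝ, 0 < lam ∧
        Measure.map (⇑(ρ g)) μ = ENNReal.ofReal lam • μ :=
  semiconjugate_affine_quasiInvariant_measure_general ρ a b ha F hF hFabove hsc
end

section
/- Let f and g be strictly increasing homeomorphisms of ℝ, let μ be a nonzero Radon measure on ℝ, and let λ_f, λ_g, λ' be positive reals with f_*μ = λ_f·μ, g_*μ = λ_g·μ, and (f∘g)_*μ = λ'·μ, where h_*μ(B) = μ(h⁻¹(B)). Define F_μ : ℝ → ℝ by F_μ(x) = μ([0,x)) for x ≥ 0 and F_μ(x) = −μ([x,0)) for x < 0, and for a homeomorphism h with factor λ_h define the affine map A_h(x) = (1/λ_h)·x + F_μ(h(0)). Then λ' = λ_f·λ_g and for every x ∈ ℝ, (1/λ')·x + F_μ(f(g(0))) = A_f(A_g(x)); that is, the assignment h ↦ A_h is multiplicative: A_{f∘g} = A_f ∘ A_g. -/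
/-!
Since `f` is increasing, `f ⁻¹' [f a, f b) = [a, b)`, so `f_* μ = λ_f • μ` gives
`μ [f a, f b) = λ_f⁻¹ μ [a, b)`. As `F_μ b - F_μ a = μ [a, b)` for `a ≤ b`, this says
`F_μ ∘ f = A_f ∘ F_μ`, and evaluating at `g 0` gives the affine identity. The factor of `f ∘ g`
is `λ_f λ_g` because pushforward is functorial and a nonzero σ-finite measure determines the
scalar in `c • μ`.
-/

open MeasureTheory

noncomputable def Fmu (μ : Measure ℝ) (x : ℝ) : ℝ :=
  if 0 ≤ x then (μ (Set.Ico 0 x)).toReal else -(μ (Set.Ico x 0)).toReal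

open Set

namespace MeasureTheory.Measure

theorem eq_of_smul_eq_smul {α : Type*} [MeasurableSpace α] {μ : Measure α} [SigmaFinite μ]
    (hμ : μ ≠ 0) {c d : ENNReal} (h : c • μ = d • μ) : c = d := by
  obtain ⟨n, hn⟩ := exists_pos_measure_of_cover (iUnion_spanningSets μ) hμ
  have hs := congrArg (· (spanningSets μ n)) h
  simp only [smul_apply, smul_eq_mul] at hs
  exact (ENNReal.mul_left_inj hn.ne' (measure_spanningSets_lt_top μ n).ne).mp hs

end MeasureTheory.Measure

section DistributionFunction

variable {μ : Measure ℝ}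

@[simp]
theorem Fmu_zero : Fmu μ 0 = 0 := by simp [Fmu]

theorem Fmu_of_nonneg {x : ℝ} (hx : 0 ≤ x) : Fmu μ x = μ.real (Ico 0 x) := if_pos hx

theorem Fmu_of_neg {x : ℝ} (hx : x < 0) : Fmu μ x = -μ.real (Ico x 0) := if_neg hx.not_ge

theorem measureReal_Ico_orderIso_of_map_eq_smul (f : ℝ ≃o ℝ) {c : ℝ} (hc : 0 < c)
    (hf : μ.map f = ENNReal.ofReal c • μ) (a b : ℝ) :
    μ.real (Ico (f a) (f b)) = c⁻¹ * μ.real (Ico a b) := by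
  have hpre : f ⁻¹' Ico (f a) (f b) = Ico a b := f.toOrderEmbedding.preimage_Ico a b
  have hmap : μ (Ico a b) = ENNReal.ofReal c * μ (Ico (f a) (f b)) := by
    rw [← hpre, ← Measure.map_apply f.monotone.measurable measurableSet_Ico, hf,
      Measure.smul_apply, smul_eq_mul]
  rw [Measure.real, Measure.real, hmap, ENNReal.toReal_mul, ENNReal.toReal_ofReal hc.le,
    inv_mul_cancel_left₀ hc.ne']

variable [IsLocallyFiniteMeasure μ]

theorem measureReal_Ico_add_Ico {a b c : ℝ} (hab : a ≤ b) (hbc : b ≤ c) :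
    μ.real (Ico a b) + μ.real (Ico b c) = μ.real (Ico a c) := by
  rw [← Ico_union_Ico_eq_Ico hab hbc, measureReal_union Ico_disjoint_Ico_same measurableSet_Ico
    measure_Ico_lt_top.ne measure_Ico_lt_top.ne]

theorem Fmu_sub_Fmu {a b : ℝ} (hab : a ≤ b) : Fmu μ b - Fmu μ a = μ.real (Ico a b) := by
  rcases le_or_gt 0 a with ha | ha
  · rw [Fmu_of_nonneg (ha.trans hab), Fmu_of_nonneg ha]
    linarith [measureReal_Ico_add_Ico (μ := μ) ha hab]
  rcases le_or_gt 0 b with hb | hb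
  · rw [Fmu_of_nonneg hb, Fmu_of_neg ha]
    linarith [measureReal_Ico_add_Ico (μ := μ) ha.le hb]
  · rw [Fmu_of_neg hb, Fmu_of_neg ha]
    linarith [measureReal_Ico_add_Ico (μ := μ) hab hb.le]

theorem Fmu_orderIso_of_map_eq_smul (f : ℝ ≃o ℝ) {c : ℝ} (hc : 0 < c)
    (hf : μ.map f = ENNReal.ofReal c • μ) (y : ℝ) :
    Fmu μ (f y) = c⁻¹ * Fmu μ y + Fmu μ (f 0) := by
  rcases le_total 0 y with hy | hy <;>
  · have h := Fmu_sub_Fmu (μ := μ) (f.monotone hy)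
    rw [measureReal_Ico_orderIso_of_map_eq_smul f hc hf, ← Fmu_sub_Fmu hy, Fmu_zero] at h
    linarith

end DistributionFunction

/-- If `f`, `g` are order-preserving homeomorphisms of ℝ quasi-preserving a nonzero Radon
measure `μ` with factors `λ_f`, `λ_g`, and `f ∘ g` quasi-preserves `μ` with factor `λ'`,
then `λ' = λ_f * λ_g` and the associated affine maps `A_h(x) = (1/λ_h) x + F_μ(h 0)`
satisfy `A_{f∘g} = A_f ∘ A_g`. -/
theorem affine_assignment_multiplicative (f g : ℝ ≃o ℝ) (μ : Measure ℝ)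
    (hμ : μ ≠ 0) (hrad : IsRadon μ)
    (lf lg l' : ℝ) (hlf : 0 < lf) (hlg : 0 < lg) (hl' : 0 < l')
    (hf : Measure.map (⇑f) μ = ENNReal.ofReal lf • μ)
    (hg : Measure.map (⇑g) μ = ENNReal.ofReal lg • μ)
    (hfg : Measure.map (⇑f ∘ ⇑g) μ = ENNReal.ofReal l' • μ) :
    l' = lf * lg ∧
      ∀ x : ℝ, (1 / l') * x + Fmu μ (f (g 0)) =
        (1 / lf) * ((1 / lg) * x + Fmu μ (g 0)) + Fmu μ (f 0) := by
  have : IsFiniteMeasureOnCompacts μ := ⟨hrad⟩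
  have hcomp : Measure.map (⇑f ∘ ⇑g) μ = ENNReal.ofReal (lf * lg) • μ := by
    rw [← Measure.map_map f.monotone.measurable g.monotone.measurable, hg,
      Measure.map_smul, hf, smul_smul, ← ENNReal.ofReal_mul hlg.le, mul_comm]
  have hl : l' = lf * lg :=
    (ENNReal.ofReal_eq_ofReal_iff hl'.le (by positivity)).mp
      (Measure.eq_of_smul_eq_smul hμ (hfg.symm.trans hcomp))
  refine ⟨hl, fun x => ?_⟩
  rw [Fmu_orderIso_of_map_eq_smul f hlf hf, hl]
  field_simp
  ring
end

section
/- Let G be a group acting on the real line by order-preserving homeomorphisms and suppose there exists T ∈ G with T(x) ≠ x for all x ∈ ℝ. Then there exists a nonempty closed G-invariant subset Λ ⊆ ℝ that is minimal: every nonempty closed G-invariant subset of Λ is equal to Λ. -/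
/-!
Some element `g` of `G` moves every point in the same direction, say `x < g x`. Then every
nonempty closed `G`-invariant set meets the compact interval `[0, g 0]`: its largest point
below `g 0` cannot lie below `0`, or `g` would push it to a larger point still below `g 0`.
Hence the intersection of a chain of nonempty closed invariant sets is nonempty by compactness,
and Zorn's lemma yields a minimal one.
-/

open Set Filter Function

theorem Continuous.forall_lt_or_forall_lt_of_forall_ne {X α : Type*} [TopologicalSpace X]
    [PreconnectedSpace X] [LinearOrder α] [TopologicalSpace α] [OrderClosedTopology α]
    {f g : X → α} (hf : Continuous f) (hg : Continuous g) (hne : ∀ x, f x ≠ g x) :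
    (∀ x, f x < g x) ∨ ∀ x, g x < f x := by
  by_contra! ⟨⟨a, ha⟩, ⟨b, hb⟩⟩
  obtain ⟨x, hx⟩ := intermediate_value_univ₂ hf hg hb ha
  exact hne x hx

theorem tendsto_iterate_atBot_of_forall_apply_lt {α : Type*} [ConditionallyCompleteLinearOrder α]
    [TopologicalSpace α] [OrderTopology α] {f : α → α} (hf : Continuous f)
    (hlt : ∀ x, f x < x) (y : α) : Tendsto (fun n => f^[n] y) atTop atBot := by
  have hanti : Antitone fun n => f^[n] y :=
    antitone_nat_of_succ_le fun n => by rw [iterate_succ_apply']; exact (hlt _).le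
  refine (tendsto_atTop_of_antitone hanti).resolve_right ?_
  rintro ⟨l, hl⟩
  exact (hlt l).ne (isFixedPt_of_tendsto_iterate hl hf.continuousAt)

theorem Icc_inter_nonempty_of_image_eq {α : Type*} [ConditionallyCompleteLinearOrder α]
    [TopologicalSpace α] [OrderTopology α] {g : α ≃o α} (hg : ∀ x, x < g x) {Λ : Set α}
    (hne : Λ.Nonempty) (hcl : IsClosed Λ) (hinv : g '' Λ = Λ) (a : α) :
    (Icc a (g a) ∩ Λ).Nonempty := by
  obtain ⟨y, hy⟩ := hne
  have hsymm : MapsTo g.symm Λ Λ := fun x hx => by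
    rwa [← hinv, g.image_eq_preimage_symm] at hx
  obtain ⟨n, hn⟩ := ((tendsto_iterate_atBot_of_forall_apply_lt g.symm.continuous
    (fun x => g.symm_apply_lt.2 (hg x)) y).eventually (eventually_le_atBot (g a))).exists
  set s := Λ ∩ Iic (g a)
  have hbdd : BddAbove s := ⟨g a, fun _ h => h.2⟩
  have hmem : sSup s ∈ s :=
    (hcl.inter isClosed_Iic).csSup_mem ⟨_, hsymm.iterate n hy, hn⟩ hbdd
  refine ⟨sSup s, ⟨?_, hmem.2⟩, hmem.1⟩
  by_contra! hlt
  have hgs : g (sSup s) ∈ s := ⟨hinv ▸ mem_image_of_mem g hmem.1, g.monotone hlt.le⟩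
  exact (hg _).not_ge (le_csSup hbdd hgs)

theorem IsCompact.inter_sInter_nonempty_of_isChain {X : Type*} [TopologicalSpace X] {K : Set X}
    (hK : IsCompact K) {c : Set (Set X)} (hchain : IsChain (· ⊆ ·) c) (hc : c.Nonempty)
    (hclosed : ∀ s ∈ c, IsClosed s) (hmeet : ∀ s ∈ c, (K ∩ s).Nonempty) :
    (K ∩ ⋂₀ c).Nonempty := by
  have := hc.to_subtype
  rw [sInter_eq_iInter, nonempty_iff_ne_empty]
  intro hempty
  obtain ⟨s, hs⟩ := hK.elim_directed_family_closed (fun s : c => (s : Set X))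
    (fun s => hclosed s s.2) hempty fun s t =>
      (hchain.total s.2 t.2).elim (fun h => ⟨s, subset_rfl, h⟩) fun h => ⟨t, h, subset_rfl⟩
  exact (hmeet s s.2).ne_empty hs

def IsNonemptyClosedInvariant {X ι : Type*} [TopologicalSpace X] (φ : ι → X → X)
    (Λ : Set X) : Prop :=
  Λ.Nonempty ∧ IsClosed Λ ∧ ∀ i, φ i '' Λ = Λ

theorem exists_minimal_isNonemptyClosedInvariant {X ι : Type*} [TopologicalSpace X]
    {φ : ι → X → X} (hφ : ∀ i, Injective (φ i)) {K : Set X} (hK : IsCompact K)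
    (hmeet : ∀ Λ, IsNonemptyClosedInvariant φ Λ → (K ∩ Λ).Nonempty) {Λ₀ : Set X}
    (h₀ : IsNonemptyClosedInvariant φ Λ₀) :
    ∃ Λ, Minimal (IsNonemptyClosedInvariant φ) Λ := by
  refine (zorn_superset_nonempty {Λ | IsNonemptyClosedInvariant φ Λ} ?_ Λ₀ h₀).imp
    fun Λ hΛ => hΛ.2
  intro c hcP hchain hc
  have := hc.to_subtype
  refine ⟨⋂₀ c, ⟨?_, isClosed_sInter fun s hs => (hcP hs).2.1, fun i => ?_⟩,
    fun s => sInter_subset_of_mem⟩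
  · exact (hK.inter_sInter_nonempty_of_isChain hchain hc (fun s hs => (hcP hs).2.1)
      (fun s hs => hmeet s (hcP hs))).mono inter_subset_right
  · rw [sInter_eq_iInter, (hφ i).injOn.image_iInter_eq]
    exact iInter_congr fun s => (hcP s.2).2.2 i

/-- If `G` acts on the line by order-preserving homeomorphisms and some `T ∈ G` acts
freely, then there is a nonempty closed `G`-invariant subset `Λ ⊆ ℝ` that is minimal:
every nonempty closed `G`-invariant subset of `Λ` equals `Λ`. -/
theorem exists_minimal_invariant_set {G : Type*} [Group G]
    (ρ : G →* (ℝ ≃o ℝ)) (T : G) (hT : ∀ x : ℝ, ρ T x ≠ x) :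
    ∃ Λ : Set ℝ, Λ.Nonempty ∧ IsClosed Λ ∧ (∀ g : G, ρ g '' Λ = Λ) ∧
      ∀ Λ' ⊆ Λ, Λ'.Nonempty → IsClosed Λ' → (∀ g : G, ρ g '' Λ' = Λ') → Λ' = Λ := by
  obtain ⟨S, hS⟩ : ∃ S : G, ∀ x, x < ρ S x := by
    rcases (ρ T).continuous.forall_lt_or_forall_lt_of_forall_ne continuous_id hT with h | h
    · exact ⟨T⁻¹, fun x => by rw [map_inv]; exact (ρ T).lt_symm_apply.2 (h x)⟩
    · exact ⟨T, h⟩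
  have huniv : IsNonemptyClosedInvariant (fun g x => ρ g x) univ :=
    ⟨univ_nonempty, isClosed_univ, fun g => image_univ_of_surjective (ρ g).surjective⟩
  obtain ⟨Λ, hΛ⟩ := exists_minimal_isNonemptyClosedInvariant (fun g => (ρ g).injective)
    isCompact_Icc (fun Λ hΛ => Icc_inter_nonempty_of_image_eq hS hΛ.1 hΛ.2.1 (hΛ.2.2 S) 0) huniv
  exact ⟨Λ, hΛ.prop.1, hΛ.prop.2.1, hΛ.prop.2.2,
    fun Λ' hsub hne hcl hinv => hΛ.eq_of_subset ⟨hne, hcl, hinv⟩ hsub⟩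
end

section
/- Let G be a group acting on the real line by order-preserving homeomorphisms such that every G-orbit is dense in ℝ. If there exists f ∈ G with f not the identity such that f has at least one fixed point, then G contains crossed elements: there exist f', g' ∈ G and real numbers a < b with f'(a) = a, g'(b) = b, and f'(x) < x and g'(x) > x for every x ∈ (a,b). -/
open Set Filter Topology Function

section

variable {α : Type*}

/-- `Crossed` is the case `α = ℝ`; a general order gives access to the order dual `αᵒᵈ`. -/
def IsCrossed [Preorder α] (f g : α → α) : Prop :=
  ∃ a b : α, a < b ∧ f a = a ∧ g b = b ∧ ∀ x ∈ Ioo a b, f x < x ∧ x < g x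

section FixedPoints

theorem IsPreconnected.forall_lt_self_or_forall_self_lt [LinearOrder α] [TopologicalSpace α]
    [OrderClosedTopology α] {s : Set α} (hs : IsPreconnected s) {ψ : α → α}
    (hψ : ContinuousOn ψ s) (hne : ∀ x ∈ s, ψ x ≠ x) :
    (∀ x ∈ s, ψ x < x) ∨ ∀ x ∈ s, x < ψ x := by
  by_contra! h
  obtain ⟨⟨x, hx, hxψ⟩, ⟨y, hy, hyψ⟩⟩ := h
  obtain ⟨z, hz, hzψ⟩ := hs.intermediate_value₂ hx hy continuousOn_id hψ hxψ hyψ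
  exact hne z hz hzψ.symm

variable [ConditionallyCompleteLinearOrder α] [TopologicalSpace α]

theorem exists_fixed_forall_mem_Ico_ne [OrderTopology α] {ψ : α → α} (hψ : Continuous ψ)
    {u p : α} (hup : u ≤ p) (hp : ψ p = p) :
    ∃ c, u ≤ c ∧ ψ c = c ∧ ∀ x ∈ Ico u c, ψ x ≠ x := by
  set S := {x | ψ x = x} ∩ Ici u
  have hS : IsClosed S := (isClosed_eq hψ continuous_id).inter isClosed_Ici
  have hbdd : BddBelow S := ⟨u, fun x hx => hx.2⟩
  have hc := hS.csInf_mem ⟨p, hp, hup⟩ hbdd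
  exact ⟨sInf S, hc.2, hc.1, fun x hx hψx => (csInf_le hbdd ⟨hψx, hx.1⟩).not_gt hx.2⟩

theorem exists_fixed_forall_mem_Ioc_ne [OrderTopology α] {ψ : α → α} (hψ : Continuous ψ)
    {u p : α} (hpu : p ≤ u) (hp : ψ p = p) :
    ∃ c, c ≤ u ∧ ψ c = c ∧ ∀ x ∈ Ioc c u, ψ x ≠ x := by
  obtain ⟨c, hcu, hc, hne⟩ :=
    exists_fixed_forall_mem_Ico_ne (α := αᵒᵈ) (u := u) (p := p) hψ hpu hp
  exact ⟨c, hcu, hc, fun x hx => hne x ⟨hx.2, hx.1⟩⟩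

theorem tendsto_iterate_of_forall_gt_lt_self [OrderTopology α] {ψ : α → α} (hψ : Continuous ψ)
    (hmono : Monotone ψ) {u y : α} (hu : ψ u = u) (hlt : ∀ x, u < x → ψ x < x) (hy : u ≤ y) :
    Tendsto (fun n => ψ^[n] y) atTop (𝓝 u) := by
  have hge (n : ℕ) : u ≤ ψ^[n] y := (iterate_fixed hu n).ge.trans (hmono.iterate n hy)
  have hanti : Antitone fun n => ψ^[n] y := antitone_nat_of_succ_le fun n => by
    rw [iterate_succ_apply']
    rcases (hge n).eq_or_lt with h | h
    · rw [← h, hu]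
    · exact (hlt _ h).le
  have hlim := tendsto_atTop_ciInf hanti ⟨u, forall_mem_range.2 hge⟩
  have hfix : ψ (⨅ n, ψ^[n] y) = ⨅ n, ψ^[n] y :=
    isFixedPt_of_tendsto_iterate hlim hψ.continuousAt
  rcases (le_ciInf hge).eq_or_lt with h | h
  · rwa [← h] at hlim
  · exact absurd hfix (hlt _ h).ne

end FixedPoints

section Action

variable {G : Type*} [Group G]

theorem OrderIso.pow_apply [LE α] (e : α ≃o α) (n : ℕ) (x : α) : (e ^ n) x = e^[n] x := by
  induction n generalizing x with
  | zero => rfl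
  | succ n ih => rw [pow_succ, RelIso.mul_apply, ih, iterate_succ_apply]

def OrderIso.dualHom [LE α] : (α ≃o α) →* (αᵒᵈ ≃o αᵒᵈ) where
  toFun := OrderIso.dual
  map_one' := rfl
  map_mul' _ _ := rfl

section LinearOrder

variable [LinearOrder α] (ρ : G →* (α ≃o α)) (f : G) (x : α)

theorem map_inv_apply_eq_self_iff : ρ f⁻¹ x = x ↔ ρ f x = x := by
  rw [map_inv]
  exact (ρ f).symm_apply_eq.trans eq_comm

theorem self_lt_map_inv_apply_iff : x < ρ f⁻¹ x ↔ ρ f x < x := by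
  rw [map_inv]
  exact (ρ f).lt_symm_apply

theorem map_inv_apply_lt_self_iff : ρ f⁻¹ x < x ↔ x < ρ f x := by
  rw [map_inv]
  exact (ρ f).symm_apply_lt

end LinearOrder

variable [ConditionallyCompleteLinearOrder α] [TopologicalSpace α] [OrderTopology α]
  (ρ : G →* (α ≃o α))

theorem exists_forall_lt_self_of_forall_ne (f : G) {s : Set α} (hs : IsPreconnected s)
    (hne : ∀ x ∈ s, ρ f x ≠ x) :
    ∃ f₀ : G, (∀ x, ρ f₀ x = x ↔ ρ f x = x) ∧ ∀ x ∈ s, ρ f₀ x < x := by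
  rcases hs.forall_lt_self_or_forall_self_lt (ρ f).continuous.continuousOn hne with h | h
  · exact ⟨f, fun _ => Iff.rfl, h⟩
  · exact ⟨f⁻¹, map_inv_apply_eq_self_iff ρ f,
      fun x hx => (map_inv_apply_lt_self_iff ρ f x).2 (h x hx)⟩

variable [DenselyOrdered α]

theorem exists_isCrossed_of_forall_mem_Ioo_ne (f : G) {a b : α} (hab : a < b)
    (ha : ρ f a = a) (hb : ρ f b = b) (hne : ∀ x ∈ Ioo a b, ρ f x ≠ x) :
    ∃ f' g' : G, IsCrossed (ρ f') (ρ g') := by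
  obtain ⟨f₀, hfix, hlt⟩ := exists_forall_lt_self_of_forall_ne ρ f isPreconnected_Ioo hne
  exact ⟨f₀, f₀⁻¹, a, b, hab, (hfix a).2 ha, (map_inv_apply_eq_self_iff ρ f₀ b).2 ((hfix b).2 hb),
    fun x hx => ⟨hlt x hx, (self_lt_map_inv_apply_iff ρ f₀ x).2 (hlt x hx)⟩⟩

theorem exists_isCrossed_of_forall_gt_lt_self [NoMaxOrder α]
    (hdense : ∀ x, Dense (range fun g : G => ρ g x)) {f : G} {u : α} (hu : ρ f u = u)
    (hlt : ∀ x, u < x → ρ f x < x) : ∃ f' g' : G, IsCrossed (ρ f') (ρ g') := by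
  obtain ⟨_, ⟨g, rfl⟩, hgu⟩ := (hdense u).exists_mem_open isOpen_Ioi nonempty_Ioi
  obtain ⟨w, huw⟩ := exists_gt u
  obtain ⟨n, hn⟩ : ∃ n, (ρ f)^[n] (ρ g w) < w :=
    ((tendsto_iterate_of_forall_gt_lt_self (ρ f).continuous (ρ f).monotone hu hlt
      (hgu.trans ((ρ g).strictMono huw)).le).eventually (gt_mem_nhds huw)).exists
  set k := f ^ n * g
  have hk (x : α) : ρ k x = (ρ f)^[n] (ρ g x) := by
    rw [map_mul, map_pow, RelIso.mul_apply, OrderIso.pow_apply]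
  have hku : u < ρ k u := by
    calc u = (ρ f)^[n] u := (iterate_fixed hu n).symm
      _ < ρ k u := hk u ▸ (ρ f).strictMono.iterate n hgu
  obtain ⟨p, hp, hkp⟩ := isPreconnected_Icc.intermediate_value₂ (left_mem_Icc.2 huw.le)
    (right_mem_Icc.2 huw.le) continuousOn_id (ρ k).continuous.continuousOn hku.le (hk w ▸ hn).le
  obtain ⟨c, huc, hkc, hne⟩ := exists_fixed_forall_mem_Ico_ne (ρ k).continuous hp.1 hkp.symm
  have huc' : u < c := huc.lt_of_ne (by rintro rfl; exact hku.ne' hkc)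
  have hgt : ∀ x ∈ Ico u c, x < ρ k x :=
    (isPreconnected_Ico.forall_lt_self_or_forall_self_lt (ρ k).continuous.continuousOn
      hne).resolve_left fun h => (h u ⟨le_rfl, huc'⟩).not_gt hku
  exact ⟨f, k, u, c, huc', hu, hkc, fun x hx => ⟨hlt x hx.1, hgt x (Ioo_subset_Ico_self hx)⟩⟩

theorem exists_isCrossed_of_forall_gt_ne [NoMaxOrder α]
    (hdense : ∀ x, Dense (range fun g : G => ρ g x)) {f : G} {u : α} (hu : ρ f u = u)
    (hne : ∀ x, u < x → ρ f x ≠ x) : ∃ f' g' : G, IsCrossed (ρ f') (ρ g') := by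
  obtain ⟨f₀, hfix, hlt⟩ := exists_forall_lt_self_of_forall_ne ρ f isPreconnected_Ioi hne
  exact exists_isCrossed_of_forall_gt_lt_self ρ hdense ((hfix u).2 hu) hlt

theorem exists_isCrossed_of_forall_lt_ne [NoMinOrder α]
    (hdense : ∀ x, Dense (range fun g : G => ρ g x)) {f : G} {u : α} (hu : ρ f u = u)
    (hne : ∀ x, x < u → ρ f x ≠ x) : ∃ f' g' : G, IsCrossed (ρ f') (ρ g') := by
  obtain ⟨f', g', a, b, hab, ha, hb, h⟩ :=
    exists_isCrossed_of_forall_gt_ne (α := αᵒᵈ) (OrderIso.dualHom.comp ρ) hdense hu hne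
  exact ⟨g', f', b, a, hab, hb, ha, fun x hx => (h x ⟨hx.2, hx.1⟩).symm⟩

end Action

end

/-- If `G` acts on the line by order-preserving homeomorphisms with all orbits dense, and
some `f ∈ G` acts nontrivially but has a fixed point, then `G` contains crossed elements. -/
theorem minimal_action_crossed_elements {G : Type*} [Group G]
    (ρ : G →* (ℝ ≃o ℝ))
    (hdense : ∀ x : ℝ, Dense (Set.range fun g : G => ρ g x))
    (f : G) (hf : ∃ x : ℝ, ρ f x ≠ x) (hfix : ∃ y : ℝ, ρ f y = y) :
    ∃ f' g' : G, Crossed (⇑(ρ f')) (⇑(ρ g')) := by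
  obtain ⟨x, hx⟩ := hf
  obtain ⟨y, hy⟩ := hfix
  by_cases habove : ∃ p, x ≤ p ∧ ρ f p = p
  · obtain ⟨p, hxp, hp⟩ := habove
    obtain ⟨b, hxb, hb, hneb⟩ := exists_fixed_forall_mem_Ico_ne (ρ f).continuous hxp hp
    by_cases hbelow : ∃ q, q ≤ x ∧ ρ f q = q
    · obtain ⟨q, hqx, hq⟩ := hbelow
      obtain ⟨a, hax, ha, hnea⟩ := exists_fixed_forall_mem_Ioc_ne (ρ f).continuous hqx hq
      have hab : a < b := (hax.lt_of_ne (by rintro rfl; exact hx ha)).trans_le hxb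
      refine exists_isCrossed_of_forall_mem_Ioo_ne ρ f hab ha hb fun z hz => ?_
      rcases le_total z x with hzx | hxz
      · exact hnea z ⟨hz.1, hzx⟩
      · exact hneb z ⟨hxz, hz.2⟩
    · push Not at hbelow
      refine exists_isCrossed_of_forall_lt_ne ρ hdense hb fun z hz => ?_
      rcases le_total z x with hzx | hxz
      · exact hbelow z hzx
      · exact hneb z ⟨hxz, hz⟩
  · push Not at habove
    have hyx : y ≤ x := le_of_not_ge fun h => habove y h hy
    obtain ⟨a, hax, ha, hnea⟩ := exists_fixed_forall_mem_Ioc_ne (ρ f).continuous hyx hy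
    refine exists_isCrossed_of_forall_gt_ne ρ hdense ha fun z hz => ?_
    rcases le_total z x with hzx | hxz
    · exact hnea z ⟨hz, hzx⟩
    · exact habove z hxz
end

section
/- Let G be a group acting on the real line by order-preserving homeomorphisms, let H be a normal subgroup of G, and let T ∈ G satisfy T(x) ≠ x for all x ∈ ℝ. Assume that H has no global fixed point (no point x ∈ ℝ satisfies h(x) = x for all h ∈ H), but that every element of H has at least one fixed point. Then H contains crossed elements: there exist f, g ∈ H and real numbers a < b with f(a) = a, g(b) = b, and f(x) < x and g(x) > x for every x ∈ (a,b). -/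
open Set Function

namespace OrderIso

variable {α : Type*}

def dualHom_s9 [Preorder α] : (α ≃o α) →* (αᵒᵈ ≃o αᵒᵈ) where
  toFun := OrderIso.dual
  map_one' := rfl
  map_mul' _ _ := rfl

lemma coe_pow_s9 [Preorder α] (f : α ≃o α) (n : ℕ) : ⇑(f ^ n) = f^[n] := by
  induction n with
  | zero => rfl
  | succ n ih => rw [pow_succ', iterate_succ', ← ih]; rfl

variable [ConditionallyCompleteLinearOrder α]

lemma exists_pow_apply_lt {f : α ≃o α} {a x : α} (hf : ∀ y < a, f y < y) (hx : x < a) (M : α) :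
    ∃ n : ℕ, (f ^ n) x < M := by
  by_contra! hM
  have hbdd : BddBelow (range fun n : ℕ => (f ^ n) x) := ⟨M, forall_mem_range.2 hM⟩
  set L := ⨅ n : ℕ, (f ^ n) x
  have hLa : L < a := (ciInf_le hbdd 0).trans_lt hx
  have hsymm : f.symm L ≤ L := le_ciInf fun n => f.symm_apply_le.2 <|
    (ciInf_le hbdd (n + 1)).trans_eq (by rw [pow_succ']; rfl)
  exact (hf L hLa).not_ge (f.symm_apply_le.1 hsymm)

variable [TopologicalSpace α] [OrderTopology α]

lemma isClosed_fixedPoints (f : α ≃o α) : IsClosed (fixedPoints f) :=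
  isClosed_eq f.continuous continuous_id

lemma exists_Ioo_of_not_ordConnected_fixedPoints {f : α ≃o α}
    (h : ¬(fixedPoints f).OrdConnected) :
    ∃ a b, a < b ∧ IsFixedPt f a ∧ IsFixedPt f b ∧ ∀ x ∈ Ioo a b, ¬IsFixedPt f x := by
  simp only [ordConnected_def, not_forall, subset_def] at h
  obtain ⟨p, hp, q, hq, c, ⟨hpc, hcq⟩, hc⟩ := h
  have hA := (f.isClosed_fixedPoints.inter isClosed_Iic).isGreatest_csSup ⟨p, hp, hpc⟩
    ⟨c, fun _ hy => hy.2⟩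
  have hB := (f.isClosed_fixedPoints.inter isClosed_Ici).isLeast_csInf ⟨q, hq, hcq⟩
    ⟨c, fun _ hy => hy.2⟩
  have hac := lt_of_le_of_ne hA.1.2 (ne_of_mem_of_not_mem hA.1.1 hc)
  have hcb := lt_of_le_of_ne hB.1.2 (ne_of_mem_of_not_mem hB.1.1 hc).symm
  refine ⟨_, _, hac.trans hcb, hA.1.1, hB.1.1, fun x ⟨hax, hxb⟩ hx => ?_⟩
  rcases le_total x c with hxc | hcx
  · exact (hA.2 ⟨hx, hxc⟩).not_gt hax
  · exact (hB.2 ⟨hx, hcx⟩).not_gt hxb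

variable [DenselyOrdered α]

lemma forall_lt_or_forall_gt_of_ordConnected (f : α ≃o α) {s : Set α} (hs : s.OrdConnected)
    (hf : ∀ x ∈ s, ¬IsFixedPt f x) : (∀ x ∈ s, f x < x) ∨ ∀ x ∈ s, x < f x := by
  by_contra! ⟨⟨x, hx, hfx⟩, ⟨y, hy, hfy⟩⟩
  obtain ⟨z, hz, hfz⟩ := exists_mem_uIcc_isFixedPt f.continuous.continuousOn hfx hfy
  exact hf z (hs.uIcc_subset hx hy hz) hfz

end OrderIso

lemma Set.OrdConnected.mem_lowerBounds_of_not_bddAbove {α : Type*} [LinearOrder α] {s : Set α}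
    (hs : s.OrdConnected) (hbdd : ¬BddAbove s) {x : α} (hx : x ∉ s) : x ∈ lowerBounds s := by
  intro p hp
  by_contra! hpx
  obtain ⟨q, hq, hxq⟩ := not_bddAbove_iff.1 hbdd x
  exact hx (hs.out hp hq ⟨hpx.le, hxq.le⟩)

section Action

variable {α G : Type*} [ConditionallyCompleteLinearOrder α] [Group G] (ρ : G →* (α ≃o α))
  {H : Subgroup G}

lemma exists_mem_lt_apply (hH : ¬∃ x, ∀ h ∈ H, ρ h x = x) (x M : α) : ∃ h ∈ H, M < ρ h x := by
  by_contra! hle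
  have hbdd : BddAbove (range fun h : H => ρ h x) := ⟨M, forall_mem_range.2 fun h => hle h h.2⟩
  refine hH ⟨⨆ h : H, ρ h x, fun h hh => ?_⟩
  rw [OrderIso.map_ciSup _ hbdd]
  simp only [← RelIso.mul_apply, ← map_mul]
  exact (Equiv.mulLeft (⟨h, hh⟩ : H)).iSup_comp (g := fun k : H => ρ k x)

variable [TopologicalSpace α] [OrderTopology α] [DenselyOrdered α]

lemma exists_mem_forall_apply_lt {h : G} (hh : h ∈ H) {s : Set α} (hs : s.OrdConnected)
    (hfs : ∀ x ∈ s, ¬IsFixedPt (ρ h) x) :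
    ∃ g ∈ H, (∀ x, IsFixedPt (ρ h) x → IsFixedPt (ρ g) x) ∧ ∀ x ∈ s, ρ g x < x := by
  rcases (ρ h).forall_lt_or_forall_gt_of_ordConnected hs hfs with hlt | hgt
  · exact ⟨h, hh, fun _ => id, hlt⟩
  · refine ⟨h⁻¹, H.inv_mem hh, fun x hx => ?_, fun x hx => ?_⟩
    · rw [map_inv]; exact (ρ h).symm_apply_eq.2 hx.symm
    · rw [map_inv]; exact (ρ h).symm_apply_lt.2 (hgt x hx)

lemma exists_mem_forall_lt_apply {h : G} (hh : h ∈ H) {s : Set α} (hs : s.OrdConnected)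
    (hfs : ∀ x ∈ s, ¬IsFixedPt (ρ h) x) :
    ∃ g ∈ H, (∀ x, IsFixedPt (ρ h) x → IsFixedPt (ρ g) x) ∧ ∀ x ∈ s, x < ρ g x :=
  exists_mem_forall_apply_lt (OrderIso.dualHom_s9.comp ρ) hh hs.dual hfs

variable [Nonempty α]

lemma exists_not_ordConnected_of_forall_not_bddAbove (hH : ¬∃ x, ∀ h ∈ H, ρ h x = x)
    (hub : ∀ h ∈ H, ¬BddAbove (fixedPoints (ρ h))) :
    ∃ h ∈ H, ¬(fixedPoints (ρ h)).OrdConnected := by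
  by_contra! hconv
  push Not at hH
  obtain ⟨x⟩ := ‹Nonempty α›
  obtain ⟨h, hh, hx⟩ := hH x
  have hlow := (hconv h hh).mem_lowerBounds_of_not_bddAbove (hub h hh) hx
  obtain ⟨q, hq, -⟩ := not_bddAbove_iff.1 (hub h hh) x
  have ha := (ρ h).isClosed_fixedPoints.isLeast_csInf ⟨q, hq⟩ ⟨x, hlow⟩
  set a := sInf (fixedPoints (ρ h))
  have hxa : x < a := lt_of_le_of_ne (hlow ha.1) (ne_of_mem_of_not_mem ha.1 hx).symm
  obtain ⟨g, hg, hga, hglt⟩ := exists_mem_forall_apply_lt ρ hh ordConnected_Iio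
    fun y hy hfy => (ha.2 hfy).not_gt hy
  obtain ⟨k, hk, hka⟩ := hH a
  obtain ⟨k', hk', -, hak⟩ := exists_mem_forall_lt_apply ρ hk (ordConnected_singleton (a := a))
    (by rintro _ rfl; exact hka)
  obtain ⟨n, hn⟩ := OrderIso.exists_pow_apply_lt hglt hxa ((ρ k')⁻¹ x)
  have hw : k' * g ^ n ∈ H := H.mul_mem hk' (H.pow_mem hg n)
  have hρw : ⇑(ρ (k' * g ^ n)) = ρ k' ∘ (ρ g ^ n) := by rw [map_mul, map_pow]; rfl
  have hwx : ρ (k' * g ^ n) x < x := by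
    simpa [hρw] using (ρ k').strictMono hn
  have hwa : a < ρ (k' * g ^ n) a := by
    rw [hρw, comp_apply, OrderIso.coe_pow_s9, ((hga a ha.1).iterate n).eq]
    exact hak a rfl
  obtain ⟨p, hp, hpfix⟩ := exists_mem_uIcc_isFixedPt (ρ _).continuous.continuousOn hwa.le hwx.le
  obtain ⟨r, hr, har⟩ := not_bddAbove_iff.1 (hub _ hw) a
  rw [uIcc_of_ge hxa.le] at hp
  exact hwa.ne' ((hconv _ hw).out hpfix hr ⟨hp.2, har.le⟩)

lemma exists_not_ordConnected_of_forall_not_bddBelow (hH : ¬∃ x, ∀ h ∈ H, ρ h x = x)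
    (hlb : ∀ h ∈ H, ¬BddBelow (fixedPoints (ρ h))) :
    ∃ h ∈ H, ¬(fixedPoints (ρ h)).OrdConnected := by
  obtain ⟨h, hh, hgap⟩ :=
    exists_not_ordConnected_of_forall_not_bddAbove (OrderIso.dualHom_s9.comp ρ) hH hlb
  exact ⟨h, hh, fun hc => hgap hc.dual⟩

end Action

section Real

variable {G : Type*} [Group G] (ρ : G →* (ℝ ≃o ℝ)) {H : Subgroup G}

lemma exists_crossed_of_not_ordConnected_fixedPoints {h : G} (hh : h ∈ H)
    (hgap : ¬(fixedPoints (ρ h)).OrdConnected) : ∃ f ∈ H, ∃ g ∈ H, Crossed (ρ f) (ρ g) := by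
  obtain ⟨a, b, hab, ha, hb, hfix⟩ := OrderIso.exists_Ioo_of_not_ordConnected_fixedPoints hgap
  have ha' : ρ h⁻¹ a = a := by rw [map_inv]; exact (ρ h).symm_apply_eq.2 ha.symm
  have hb' : ρ h⁻¹ b = b := by rw [map_inv]; exact (ρ h).symm_apply_eq.2 hb.symm
  rcases (ρ h).forall_lt_or_forall_gt_of_ordConnected ordConnected_Ioo hfix with hlt | hgt
  · refine ⟨h, hh, h⁻¹, H.inv_mem hh, a, b, hab, ha, hb', fun x hx => ⟨hlt x hx, ?_⟩⟩
    rw [map_inv]; exact (ρ h).lt_symm_apply.2 (hlt x hx)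
  · refine ⟨h⁻¹, H.inv_mem hh, h, hh, a, b, hab, ha', hb, fun x hx => ⟨?_, hgt x hx⟩⟩
    rw [map_inv]; exact (ρ h).symm_apply_lt.2 (hgt x hx)

lemma exists_crossed_of_bddAbove_of_bddBelow (hH : ¬∃ x, ∀ h ∈ H, ρ h x = x) {h k : G}
    (hh : h ∈ H) (hk : k ∈ H) (hh₀ : (fixedPoints (ρ h)).Nonempty)
    (hh₁ : BddAbove (fixedPoints (ρ h))) (hk₀ : (fixedPoints (ρ k)).Nonempty)
    (hk₁ : BddBelow (fixedPoints (ρ k))) : ∃ f ∈ H, ∃ g ∈ H, Crossed (ρ f) (ρ g) := by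
  have hβ := (ρ h).isClosed_fixedPoints.isGreatest_csSup hh₀ hh₁
  have hα := (ρ k).isClosed_fixedPoints.isLeast_csInf hk₀ hk₁
  obtain ⟨f, hf, hfβ, hflt⟩ := exists_mem_forall_apply_lt ρ hh ordConnected_Ioi
    fun x hx hfx => (hβ.2 hfx).not_gt hx
  obtain ⟨g, hg, hgα, hglt⟩ := exists_mem_forall_lt_apply ρ hk ordConnected_Iio
    fun x hx hfx => (hα.2 hfx).not_gt hx
  obtain ⟨u, hu, hβu⟩ :=
    exists_mem_lt_apply ρ hH (sInf (fixedPoints (ρ k))) (sSup (fixedPoints (ρ h)))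
  refine ⟨f, hf, u * g * u⁻¹, H.mul_mem (H.mul_mem hu hg) (H.inv_mem hu), _, _, hβu,
    hfβ _ hβ.1, ?_, fun x ⟨hβx, hxu⟩ => ⟨hflt x hβx, ?_⟩⟩
  · simp [(hgα _ hα.1).eq]
  · simp only [map_mul, map_inv, RelIso.mul_apply]
    exact (ρ u).symm_apply_lt.1 (hglt _ ((ρ u).symm_apply_lt.2 hxu))

end Real

theorem normal_subgroup_crossed_elements_general {G : Type*} [Group G]
    (ρ : G →* (ℝ ≃o ℝ)) (H : Subgroup G)
    (hnoglobal : ¬ ∃ x : ℝ, ∀ h ∈ H, ρ h x = x)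
    (hfix : ∀ h ∈ H, ∃ x : ℝ, ρ h x = x) :
    ∃ f ∈ H, ∃ g ∈ H, Crossed (⇑(ρ f)) (⇑(ρ g)) := by
  by_cases hbdd : (∃ h ∈ H, BddAbove (fixedPoints (ρ h))) ∧ ∃ k ∈ H, BddBelow (fixedPoints (ρ k))
  · obtain ⟨⟨h, hh, hh₁⟩, k, hk, hk₁⟩ := hbdd
    exact exists_crossed_of_bddAbove_of_bddBelow ρ hnoglobal hh hk (hfix h hh) hh₁ (hfix k hk) hk₁
  obtain ⟨h, hh, hgap⟩ : ∃ h ∈ H, ¬(fixedPoints (ρ h)).OrdConnected := by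
    rcases not_and_or.1 hbdd with hub | hlb
    · push Not at hub
      exact exists_not_ordConnected_of_forall_not_bddAbove ρ hnoglobal hub
    · push Not at hlb
      exact exists_not_ordConnected_of_forall_not_bddBelow ρ hnoglobal hlb
  exact exists_crossed_of_not_ordConnected_fixedPoints ρ hh hgap

/-- If `G` acts on the line by order-preserving homeomorphisms, `T ∈ G` acts freely, and
`H ⊴ G` has no global fixed point while each of its elements has a fixed point, then `H`
contains crossed elements. -/
theorem normal_subgroup_crossed_elements {G : Type*} [Group G]
    (ρ : G →* (ℝ ≃o ℝ)) (H : Subgroup G) (hHn : H.Normal)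
    (T : G) (hT : ∀ x : ℝ, ρ T x ≠ x)
    (hnoglobal : ¬ ∃ x : ℝ, ∀ h ∈ H, ρ h x = x)
    (hfix : ∀ h ∈ H, ∃ x : ℝ, ρ h x = x) :
    ∃ f ∈ H, ∃ g ∈ H, Crossed (⇑(ρ f)) (⇑(ρ g)) :=
  normal_subgroup_crossed_elements_general ρ H hnoglobal hfix
end

section
/- Let G be a group acting on the real line by order-preserving homeomorphisms with no global fixed point (no x ∈ ℝ is fixed by every element of G). Let μ be a nonzero Radon measure on ℝ quasi-invariant under G (for every g ∈ G there is λ_g > 0 with g_*μ = λ_g·μ, where g_*μ(B) = μ(g⁻¹(B))). Let Λ be a nonempty closed G-invariant subset of the support of μ such that Λ has an accumulation point and Λ is minimal (every nonempty closed G-invariant subset of Λ equals Λ). Then Λ equals the support of μ. -/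
/-!
Suppose a point `x` of the support of `μ` lies outside `Λ`. Since a bounded invariant set would
have its supremum or infimum as a global fixed point, `Λ` is unbounded on both sides, so `x` lies
in a gap `(a, b)` of `Λ`, of positive mass. In the coordinate `φ t = μ (b, t]` every `g` acts
affinely: `φ (g t) = φ (g b) + φ t / λ_g`. Minimality makes every point of `Λ` an accumulation
point, and the orbit of `b` dense in `Λ`; hence some `g b` lies just to the right of `b`, so
`φ (g b)` is small and positive, and since `g` maps the gap into `(b, g b]`, `λ_g` is large.
The commutator of two such elements is a nonzero translation in `φ`; conjugated by a strong
contraction it becomes a translation shorter than the mass of the gap, and then it pushes `b`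
into the gap, which is impossible.
-/

open MeasureTheory Filter

/-- The support of a measure `μ` on ℝ: the points all of whose open neighbourhoods have
positive measure. -/
def measureSupport (μ : Measure ℝ) : Set ℝ :=
  {x | ∀ U : Set ℝ, IsOpen U → x ∈ U → 0 < μ U}

open Set Topology
open scoped commutatorElement

section OrderDynamics

variable {ι α : Type*} [ConditionallyCompleteLinearOrder α] {Λ : Set α}

theorem exists_forall_apply_eq_of_bddAbove (f : ι → α ≃o α) (hinv : ∀ i, f i '' Λ = Λ)
    (hne : Λ.Nonempty) (hbdd : BddAbove Λ) : ∃ x, ∀ i, f i x = x :=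
  ⟨sSup Λ, fun i => by rw [(f i).map_csSup' hne hbdd, hinv]⟩

theorem exists_forall_apply_eq_of_bddBelow (f : ι → α ≃o α) (hinv : ∀ i, f i '' Λ = Λ)
    (hne : Λ.Nonempty) (hbdd : BddBelow Λ) : ∃ x, ∀ i, f i x = x :=
  ⟨sInf Λ, fun i => by rw [(f i).map_csInf' hne hbdd, hinv]⟩

theorem IsClosed.exists_disjoint_Ioo_of_notMem [TopologicalSpace α] [OrderTopology α]
    (hcl : IsClosed Λ) (hbddA : ¬BddAbove Λ) (hbddB : ¬BddBelow Λ) {x : α} (hx : x ∉ Λ) :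
    ∃ a ∈ Λ, ∃ b ∈ Λ, x ∈ Ioo a b ∧ Disjoint (Ioo a b) Λ := by
  obtain ⟨za, hza, hzax⟩ := not_bddBelow_iff.mp hbddB x
  obtain ⟨zb, hzb, hxzb⟩ := not_bddAbove_iff.mp hbddA x
  have ha := (hcl.inter isClosed_Iic).csSup_mem ⟨za, hza, hzax.le⟩ ⟨x, fun _ hz => hz.2⟩
  have hb := (hcl.inter isClosed_Ici).csInf_mem ⟨zb, hzb, hxzb.le⟩ ⟨x, fun _ hz => hz.2⟩
  refine ⟨_, ha.1, _, hb.1, ⟨ha.2.lt_of_ne (ne_of_mem_of_not_mem ha.1 hx),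
    hb.2.lt_of_ne' (ne_of_mem_of_not_mem hb.1 hx)⟩, disjoint_left.mpr fun z hz hzΛ => ?_⟩
  rcases le_total z x with hzx | hxz
  · exact hz.1.not_ge (le_csSup ⟨x, fun _ hw => hw.2⟩ ⟨hzΛ, hzx⟩)
  · exact hz.2.not_ge (csInf_le ⟨x, fun _ hw => hw.2⟩ ⟨hzΛ, hxz⟩)

end OrderDynamics

section MinimalSet

variable {G α : Type*} [Group G] [LinearOrder α] [TopologicalSpace α] [OrderTopology α]
  (ρ : G →* (α ≃o α)) {Λ : Set α}

def IsMinimalSet (Λ : Set α) : Prop :=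
  ∀ Λ' ⊆ Λ, Λ'.Nonempty → IsClosed Λ' → (∀ g : G, ρ g '' Λ' = Λ') → Λ' = Λ

omit [TopologicalSpace α] [OrderTopology α] in
theorem image_eq_of_forall_image_subset {S : Set α} (h : ∀ g, ρ g '' S ⊆ S) (g : G) :
    ρ g '' S = S :=
  (h g).antisymm fun y hy => ⟨ρ g⁻¹ y, h g⁻¹ (mem_image_of_mem _ hy), by simp⟩

variable {ρ}

theorem IsMinimalSet.subset_derivedSet [OrderClosedTopology α] (hmin : IsMinimalSet ρ Λ)
    (hcl : IsClosed Λ) (hinv : ∀ g, ρ g '' Λ = Λ) (hacc : (derivedSet Λ).Nonempty) :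
    Λ ⊆ derivedSet Λ := by
  have hinvD : ∀ g, ρ g '' derivedSet Λ ⊆ derivedSet Λ := fun g => by
    simpa only [hinv g] using (ρ g).continuous.image_derivedSet (A := Λ) (ρ g).injective
  exact (hmin _ ((isClosed_iff_derivedSet_subset Λ).mp hcl) hacc (isClosed_derivedSet Λ)
    (image_eq_of_forall_image_subset ρ hinvD)).ge

theorem IsMinimalSet.subset_closure_orbit (hmin : IsMinimalSet ρ Λ) (hcl : IsClosed Λ)
    (hinv : ∀ g, ρ g '' Λ = Λ) {b : α} (hb : b ∈ Λ) :
    Λ ⊆ closure (range fun g => ρ g b) := by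
  have horbit : ∀ g, ρ g '' range (fun h => ρ h b) ⊆ range fun h => ρ h b := by
    rintro g _ ⟨_, ⟨h, rfl⟩, rfl⟩
    exact ⟨g * h, by simp⟩
  have hinvC : ∀ g, ρ g '' closure (range fun h => ρ h b) ⊆ closure (range fun h => ρ h b) :=
    fun g => (image_closure_subset_closure_image (ρ g).continuous).trans
      (closure_mono (horbit g))
  refine (hmin (closure (range fun g => ρ g b)) ?_ ⟨b, subset_closure ⟨1, by simp⟩⟩
    isClosed_closure (image_eq_of_forall_image_subset ρ hinvC)).ge
  refine closure_minimal ?_ hcl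
  rintro _ ⟨g, rfl⟩
  exact hinv g ▸ mem_image_of_mem _ hb

theorem IsMinimalSet.exists_apply_mem_Ioo [OrderClosedTopology α] (hmin : IsMinimalSet ρ Λ)
    (hcl : IsClosed Λ) (hinv : ∀ g, ρ g '' Λ = Λ) (hacc : (derivedSet Λ).Nonempty)
    {a b c : α} (hb : b ∈ Λ) (hab : a < b) (hgap : Disjoint (Ioo a b) Λ) (hbc : b < c) :
    ∃ g, ρ g b ∈ Ioo b c := by
  obtain ⟨z, ⟨hz, hzΛ⟩, hzb⟩ :=
    accPt_iff_nhds.mp (hmin.subset_derivedSet hcl hinv hacc hb) _ (Ioo_mem_nhds hab hbc)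
  have hbz : b < z := (not_lt.mp fun h => disjoint_left.mp hgap ⟨hz.1, h⟩ hzΛ).lt_of_ne' hzb
  obtain ⟨_, hg, g, rfl⟩ := mem_closure_iff.mp (hmin.subset_closure_orbit hcl hinv hb hzΛ)
    (Ioo b c) isOpen_Ioo ⟨hbz, hz.2⟩
  exact ⟨g, hg⟩

end MinimalSet

section MeasureCoord

def measureCoord (μ : Measure ℝ) (b t : ℝ) : ℝ := μ.real (Ioc b t) - μ.real (Ioc t b)

variable {μ : Measure ℝ}

@[simp]
theorem measureCoord_self (b : ℝ) : measureCoord μ b b = 0 := by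
  simp [measureCoord]

theorem measureReal_Ioc_add_Ioc [IsLocallyFiniteMeasure μ] {s u t : ℝ} (hsu : s ≤ u)
    (hut : u ≤ t) :
    μ.real (Ioc s u) + μ.real (Ioc u t) = μ.real (Ioc s t) := by
  rw [← Ioc_union_Ioc_eq_Ioc hsu hut, measureReal_union (Ioc_disjoint_Ioc_of_le le_rfl)
    measurableSet_Ioc measure_Ioc_lt_top.ne measure_Ioc_lt_top.ne]

theorem measureCoord_sub_measureCoord [IsLocallyFiniteMeasure μ] (b : ℝ) {s t : ℝ}
    (hst : s ≤ t) :
    measureCoord μ b t - measureCoord μ b s = μ.real (Ioc s t) := by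
  simp only [measureCoord]
  rcases le_total b s with hbs | hsb
  · rw [Ioc_eq_empty_of_le hbs, Ioc_eq_empty_of_le (hbs.trans hst),
      ← measureReal_Ioc_add_Ioc hbs hst, measureReal_empty]
    ring
  rcases le_total b t with hbt | htb
  · rw [Ioc_eq_empty_of_le hsb, Ioc_eq_empty_of_le hbt, ← measureReal_Ioc_add_Ioc hsb hbt,
      measureReal_empty]
    ring
  · rw [Ioc_eq_empty_of_le hsb, Ioc_eq_empty_of_le htb, ← measureReal_Ioc_add_Ioc hst htb,
      measureReal_empty]
    ring

theorem measureCoord_monotone [IsLocallyFiniteMeasure μ] (b : ℝ) :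
    Monotone (measureCoord μ b) := fun _ _ hst =>
  sub_nonneg.mp (measureCoord_sub_measureCoord (μ := μ) b hst ▸ measureReal_nonneg)

theorem exists_measureReal_Ioc_lt [IsLocallyFiniteMeasure μ] (b : ℝ) {δ : ℝ} (hδ : 0 < δ) :
    ∃ c, b < c ∧ μ.real (Ioc b c) < δ := by
  have hempty : ⋂ r > b, Ioc b r = ∅ := by
    refine eq_empty_of_forall_notMem fun z hz => ?_
    have hbz := (mem_iInter₂.mp hz (b + 1) (by linarith)).1
    have hzb := (mem_iInter₂.mp hz ((b + z) / 2) (by linarith)).2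
    linarith
  have hlim := tendsto_measure_biInter_gt (μ := μ) (s := fun r => Ioc b r) (a := b)
    (fun _ _ => nullMeasurableSet_Ioc) (fun _ _ _ hij => Ioc_subset_Ioc_right hij)
    ⟨b + 1, by linarith, measure_Ioc_lt_top.ne⟩
  rw [hempty, measure_empty] at hlim
  obtain ⟨c, hc, hbc⟩ := ((hlim.eventually (gt_mem_nhds (ENNReal.ofReal_pos.mpr hδ))).and
    self_mem_nhdsWithin).exists
  exact ⟨c, hbc, ENNReal.toReal_lt_of_lt_ofReal hc⟩

theorem measureReal_preimage_of_map_eq_smul {f : ℝ → ℝ} (hf : Measurable f) {lam : ℝ}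
    (hlam : 0 ≤ lam) (hmap : μ.map f = ENNReal.ofReal lam • μ) {B : Set ℝ}
    (hB : MeasurableSet B) : μ.real (f ⁻¹' B) = lam * μ.real B := by
  rw [measureReal_def, ← Measure.map_apply hf hB, hmap, Measure.smul_apply, smul_eq_mul,
    ENNReal.toReal_mul, ENNReal.toReal_ofReal hlam, measureReal_def]

theorem measureCoord_orderIso_apply [IsLocallyFiniteMeasure μ] (b : ℝ) (f : ℝ ≃o ℝ) {lam : ℝ}
    (hlam : 0 < lam) (hmap : μ.map f = ENNReal.ofReal lam • μ) (t : ℝ) :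
    measureCoord μ b (f t) = measureCoord μ b (f b) + lam⁻¹ * measureCoord μ b t := by
  have key : ∀ s t, s ≤ t → measureCoord μ b (f t) - measureCoord μ b (f s) =
      lam⁻¹ * (measureCoord μ b t - measureCoord μ b s) := by
    intro s t hst
    have h := measureReal_preimage_of_map_eq_smul f.continuous.measurable hlam.le hmap
      (measurableSet_Ioc (a := f s) (b := f t))
    rw [f.preimage_Ioc, f.symm_apply_apply, f.symm_apply_apply] at h
    rw [measureCoord_sub_measureCoord b hst, measureCoord_sub_measureCoord b (f.monotone hst), h,
      inv_mul_cancel_left₀ hlam.ne']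
  rcases le_total b t with hbt | htb
  · have h := key b t hbt
    simp only [measureCoord_self, sub_zero] at h
    linarith
  · have h := key t b htb
    simp only [measureCoord_self, zero_sub] at h
    linarith

end MeasureCoord

section AffineCoord

variable {G α : Type*} [Group G] [LE α]

def IsAffineCoord (ρ : G →* (α ≃o α)) (φ : α → ℝ) (τ c : G → ℝ) : Prop :=
  ∀ g x, φ (ρ g x) = τ g + c g * φ x

variable {ρ : G →* (α ≃o α)} {φ : α → ℝ} {τ c : G → ℝ}

theorem IsAffineCoord.apply_inv (hφ : IsAffineCoord ρ φ τ c) {g : G} (hc : c g ≠ 0) (x : α) :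
    φ (ρ g⁻¹ x) = (φ x - τ g) / c g := by
  have h := hφ g (ρ g⁻¹ x)
  simp only [← RelIso.mul_apply, ← map_mul, mul_inv_cancel, map_one, RelIso.coe_one,
    id_eq] at h
  rw [eq_div_iff hc]
  linarith

theorem IsAffineCoord.apply_commutatorElement (hφ : IsAffineCoord ρ φ τ c) (hc : ∀ g, c g ≠ 0)
    (g h : G) (x : α) :
    φ (ρ ⁅g, h⁆ x) = φ x + (τ g * (1 - c h) - τ h * (1 - c g)) := by
  simp only [commutatorElement_def, map_mul, RelIso.mul_apply]
  rw [hφ, hφ, hφ.apply_inv (hc g), hφ.apply_inv (hc h)]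
  field_simp [hc g, hc h]
  ring

theorem IsAffineCoord.apply_conj (hφ : IsAffineCoord ρ φ τ c) (hc : ∀ g, c g ≠ 0) {k : G}
    {t : ℝ} (hk : ∀ x, φ (ρ k x) = φ x + t) (g : G) (x : α) :
    φ (ρ (g * k * g⁻¹) x) = φ x + c g * t := by
  simp only [map_mul, RelIso.mul_apply]
  rw [hφ, hk, hφ.apply_inv (hc g)]
  field_simp [hc g]
  ring

theorem IsAffineCoord.exists_forall_mem_Ioo (hφ : IsAffineCoord ρ φ τ c) (hc : ∀ g, 0 < c g)
    (hsmall : ∀ ε > 0, ∃ g, 0 < τ g ∧ τ g < ε ∧ c g < ε) {K : ℝ} (hK : 0 < K) :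
    ∃ w, ∀ x, φ (ρ w x) ∈ Ioo (φ x - K) (φ x) := by
  have hc' : ∀ g, c g ≠ 0 := fun g => (hc g).ne'
  obtain ⟨h, hτh, hτh1, -⟩ := hsmall 1 one_pos
  obtain ⟨u, hτu, hτu1, hcu⟩ := hsmall (τ h / 2) (by positivity)
  set t := τ h * (1 - c u) - τ u * (1 - c h)
  have ht : 0 < t := by nlinarith [hc h, hc u]
  have hk : ∀ x, φ (ρ ⁅u, h⁆ x) = φ x + -t := fun x => by
    rw [hφ.apply_commutatorElement hc']
    ring
  obtain ⟨g, -, -, hcg⟩ := hsmall (K / t) (div_pos hK ht)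
  refine ⟨g * ⁅u, h⁆ * g⁻¹, fun x => ?_⟩
  rw [lt_div_iff₀ ht] at hcg
  rw [hφ.apply_conj hc' hk]
  constructor <;> nlinarith [hc g]

end AffineCoord

section GapMeasure

variable {G : Type*} [Group G] {μ : Measure ℝ} {Λ : Set ℝ} {a b : ℝ}

theorem measureReal_pos_of_mem_measureSupport {x : ℝ} (hx : x ∈ measureSupport μ) {U : Set ℝ}
    (hU : IsOpen U) (hxU : x ∈ U) (hfin : μ U ≠ ⊤) : 0 < μ.real U :=
  ENNReal.toReal_pos (hx U hU hxU).ne' hfin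

theorem le_apply_of_disjoint_Ioo {α : Type*} [LinearOrder α] {Λ : Set α} {a b : α} (f : α ≃o α)
    (hf : f '' Λ = Λ) (hb : b ∈ Λ) (hgap : Disjoint (Ioo a b) Λ) (hbf : b < f b) : b ≤ f a := by
  by_contra! h
  obtain ⟨y, hy, hyb⟩ : b ∈ f '' Λ := hf.symm ▸ hb
  obtain ⟨z, hz, hzb⟩ : b ∈ f '' Ioo a b := f.image_Ioo a b ▸ ⟨h, hbf⟩
  exact disjoint_left.mp hgap hz (f.injective (hzb.trans hyb.symm) ▸ hy)

theorem measureCoord_le_of_disjoint_Ioo [IsLocallyFiniteMeasure μ] (hab : a ≤ b)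
    (hgap : Disjoint (Ioo a b) Λ) {z : ℝ} (hz : z ∈ Λ) (hneg : measureCoord μ b z < 0) :
    measureCoord μ b z ≤ -μ.real (Ioo a b) := by
  have hzb : z < b := lt_of_not_ge fun h =>
    hneg.not_ge (measureCoord_self (μ := μ) b ▸ measureCoord_monotone b h)
  have hza : z ≤ a := not_lt.mp fun h => disjoint_left.mp hgap ⟨h, hzb⟩ hz
  calc measureCoord μ b z ≤ measureCoord μ b a := measureCoord_monotone b hza
    _ = -μ.real (Ioc a b) := by
      linarith [measureCoord_sub_measureCoord (μ := μ) b hab, measureCoord_self (μ := μ) b]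
    _ ≤ -μ.real (Ioo a b) := neg_le_neg (measureReal_mono Ioo_subset_Ioc_self
      measure_Ioc_lt_top.ne)

theorem exists_measureCoord_apply_lt_and_inv_lt [IsLocallyFiniteMeasure μ] (ρ : G →* (ℝ ≃o ℝ))
    {lam : G → ℝ} (hlam : ∀ g, 0 < lam g) (hmap : ∀ g, μ.map (ρ g) = ENNReal.ofReal (lam g) • μ)
    (hinv : ∀ g, ρ g '' Λ = Λ) (hsub : Λ ⊆ measureSupport μ) (hb : b ∈ Λ)
    (hgap : Disjoint (Ioo a b) Λ) (hK : 0 < μ.real (Ioo a b))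
    (horbit : ∀ c, b < c → ∃ g, ρ g b ∈ Ioo b c) {ε : ℝ} (hε : 0 < ε) :
    ∃ g, 0 < measureCoord μ b (ρ g b) ∧ measureCoord μ b (ρ g b) < ε ∧ (lam g)⁻¹ < ε := by
  obtain ⟨c, hbc, hc⟩ := exists_measureReal_Ioc_lt (μ := μ) b (δ := min ε (ε * μ.real (Ioo a b)))
    (by positivity)
  obtain ⟨g, hg⟩ := horbit c hbc
  obtain ⟨g', hg'⟩ := horbit _ hg.1
  have hφg : measureCoord μ b (ρ g b) = μ.real (Ioc b (ρ g b)) := by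
    simpa using measureCoord_sub_measureCoord (μ := μ) b hg.1.le
  have hle : μ.real (Ioc b (ρ g b)) ≤ μ.real (Ioc b c) :=
    measureReal_mono (Ioc_subset_Ioc_right hg.2.le) measure_Ioc_lt_top.ne
  have hpos : 0 < μ.real (Ioc b (ρ g b)) :=
    (measureReal_pos_of_mem_measureSupport (hsub (hinv g' ▸ mem_image_of_mem _ hb)) isOpen_Ioo
      hg' measure_Ioo_lt_top.ne).trans_le
      (measureReal_mono Ioo_subset_Ioc_self measure_Ioc_lt_top.ne)
  -- `ρ g` carries the gap `(a, b)` into `(b, ρ g b]`, scaling its mass by `(lam g)⁻¹`.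
  have hgap_image : (lam g)⁻¹ * μ.real (Ioo a b) ≤ μ.real (Ioc b (ρ g b)) := by
    have h := measureReal_preimage_of_map_eq_smul (ρ g).continuous.measurable (hlam g).le
      (hmap g) (measurableSet_Ioo (a := ρ g a) (b := ρ g b))
    rw [OrderIso.preimage_Ioo, OrderIso.symm_apply_apply, OrderIso.symm_apply_apply,
      ← inv_mul_eq_iff_eq_mul₀ (hlam g).ne'] at h
    rw [h]
    have hba := le_apply_of_disjoint_Ioo (ρ g) (hinv g) hb hgap hg.1
    exact measureReal_mono (fun z hz => ⟨hba.trans_lt hz.1, hz.2.le⟩) measure_Ioc_lt_top.ne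
  refine ⟨g, hφg ▸ hpos, by linarith [min_le_left ε (ε * μ.real (Ioo a b))], ?_⟩
  exact lt_of_mul_lt_mul_right (by linarith [min_le_right ε (ε * μ.real (Ioo a b))]) hK.le

end GapMeasure

theorem minimal_set_eq_support_general {G : Type*} [Group G]
    (ρ : G →* (ℝ ≃o ℝ))
    (hnofix : ¬ ∃ x : ℝ, ∀ g : G, ρ g x = x)
    (μ : Measure ℝ) (hrad : IsRadon μ)
    (hqi : ∀ g : G, ∃ lam : ℝ, 0 < lam ∧
      Measure.map (⇑(ρ g)) μ = ENNReal.ofReal lam • μ)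
    (Λ : Set ℝ) (hne : Λ.Nonempty) (hcl : IsClosed Λ)
    (hinv : ∀ g : G, ρ g '' Λ = Λ)
    (hsub : Λ ⊆ measureSupport μ)
    (hacc : ∃ x : ℝ, AccPt x (𝓟 Λ))
    (hmin : ∀ Λ' ⊆ Λ, Λ'.Nonempty → IsClosed Λ' → (∀ g : G, ρ g '' Λ' = Λ') → Λ' = Λ) :
    Λ = measureSupport μ := by
  have : IsFiniteMeasureOnCompacts μ := ⟨hrad⟩
  choose lam hlam hmap using hqi
  refine hsub.antisymm fun x hx => by_contra fun hxΛ => ?_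
  obtain ⟨a, -, b, hb, hxab, hgap⟩ := hcl.exists_disjoint_Ioo_of_notMem
    (fun h => hnofix (exists_forall_apply_eq_of_bddAbove _ hinv hne h))
    (fun h => hnofix (exists_forall_apply_eq_of_bddBelow _ hinv hne h)) hxΛ
  have hab : a < b := hxab.1.trans hxab.2
  have hK : 0 < μ.real (Ioo a b) :=
    measureReal_pos_of_mem_measureSupport hx isOpen_Ioo hxab measure_Ioo_lt_top.ne
  have hφ : IsAffineCoord ρ (measureCoord μ b) (fun g => measureCoord μ b (ρ g b))
      (fun g => (lam g)⁻¹) := fun g =>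
    measureCoord_orderIso_apply b (ρ g) (hlam g) (hmap g)
  obtain ⟨w, hw⟩ := hφ.exists_forall_mem_Ioo (fun g => inv_pos.mpr (hlam g))
    (fun _ hε => exists_measureCoord_apply_lt_and_inv_lt ρ hlam hmap hinv hsub hb hgap hK
      (fun _ hbc => IsMinimalSet.exists_apply_mem_Ioo hmin hcl hinv hacc hb hab hgap hbc) hε) hK
  have hwb := hw b
  rw [measureCoord_self] at hwb
  linarith [measureCoord_le_of_disjoint_Ioo hab.le hgap (hinv w ▸ mem_image_of_mem _ hb) hwb.2,
    hwb.1]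

/-- If `G` acts on the line by order-preserving homeomorphisms with no global fixed point
and quasi-preserves a nonzero Radon measure `μ`, then any nonempty closed `G`-invariant
minimal subset `Λ` of the support of `μ` having an accumulation point equals the support
of `μ`. -/
theorem minimal_set_eq_support {G : Type*} [Group G]
    (ρ : G →* (ℝ ≃o ℝ))
    (hnofix : ¬ ∃ x : ℝ, ∀ g : G, ρ g x = x)
    (μ : Measure ℝ) (hμ : μ ≠ 0) (hrad : IsRadon μ)
    (hqi : ∀ g : G, ∃ lam : ℝ, 0 < lam ∧
      Measure.map (⇑(ρ g)) μ = ENNReal.ofReal lam • μ)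
    (Λ : Set ℝ) (hne : Λ.Nonempty) (hcl : IsClosed Λ)
    (hinv : ∀ g : G, ρ g '' Λ = Λ)
    (hsub : Λ ⊆ measureSupport μ)
    (hacc : ∃ x : ℝ, AccPt x (𝓟 Λ))
    (hmin : ∀ Λ' ⊆ Λ, Λ'.Nonempty → IsClosed Λ' → (∀ g : G, ρ g '' Λ' = Λ') → Λ' = Λ) :
    Λ = measureSupport μ :=
  minimal_set_eq_support_general ρ hnofix μ hrad hqi Λ hne hcl hinv hsub hacc hmin
end

section
/- Let G be a group of affine transformations of ℝ, each of the form x ↦ a·x + b with a > 0. Suppose G has no global fixed point (no x ∈ ℝ satisfies g(x) = x for all g ∈ G), and suppose some G-orbit has an accumulation point in ℝ. Then every G-orbit is dense in ℝ. -/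
open Filter Set Pointwise

/-!
Write `g x = a g * x + b g`. The elements of slope `1` act by translations, and their translation
parts form an additive subgroup `T` of `ℝ`; since `x + T` lies in the orbit of `x`, it suffices to
show that `T` is dense, i.e. contains arbitrarily small nonzero elements.

If every slope is `1`, the group acts by translations only, so two distinct orbit points close to
the accumulation point differ by a small nonzero element of `T`.

Otherwise pick `g` with slope `λ < 1`. Conjugating a translation by `g` multiplies it by `λ`, so a
single nonzero `t ∈ T` yields the small elements `λ ^ n * t ∈ T`. Such a `t` is provided by a
commutator `[w, g]`: it is a translation, and if all of them were trivial, every `w` would fix the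
fixed point of `g`.
-/

lemma Metric.exists_ne_dist_lt_of_accPt {X : Type*} [MetricSpace X] {C : Set X} {y : X}
    (hy : AccPt y (𝓟 C)) {ε : ℝ} (hε : 0 < ε) :
    ∃ s₁ ∈ C, ∃ s₂ ∈ C, s₁ ≠ s₂ ∧ dist s₁ s₂ < ε := by
  have hnear : AccPt y (𝓟 (C ∩ Metric.ball y (ε / 2))) := by
    rw [accPt_iff_frequently] at hy ⊢
    refine (hy.and_eventually (Metric.ball_mem_nhds y (half_pos hε))).mono ?_
    rintro z ⟨⟨hzy, hzC⟩, hzball⟩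
    exact ⟨hzy, hzC, hzball⟩
  obtain ⟨s₁, ⟨hs₁C, hs₁y⟩, s₂, ⟨hs₂C, hs₂y⟩, hne⟩ := (Set.Infinite.of_accPt hnear).nontrivial
  refine ⟨s₁, hs₁C, s₂, hs₂C, hne, ?_⟩
  rw [Metric.mem_ball] at hs₁y hs₂y
  calc dist s₁ s₂ ≤ dist s₁ y + dist s₂ y := dist_triangle_right _ _ _
    _ < ε / 2 + ε / 2 := add_lt_add hs₁y hs₂y
    _ = ε := add_halves ε

lemma AddSubgroup.dense_of_exists_abs_lt (S : AddSubgroup ℝ)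
    (hS : ∀ ε > 0, ∃ s ∈ S, s ≠ 0 ∧ |s| < ε) : Dense (S : Set ℝ) := by
  refine S.dense_of_not_isolated_zero fun ε hε => ?_
  obtain ⟨s, hsS, hs0, hsε⟩ := hS ε hε
  rcases lt_or_gt_of_ne hs0 with hneg | hpos
  · exact ⟨-s, S.neg_mem hsS, neg_pos.mpr hneg, by rwa [abs_of_neg hneg] at hsε⟩
  · exact ⟨s, hsS, hpos, by rwa [abs_of_pos hpos] at hsε⟩

structure IsPosAffineAction {G : Type*} [Group G] (a b : G → ℝ) : Prop where
  slope_pos : ∀ g, 0 < a g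
  slope_mul : ∀ g h, a (g * h) = a g * a h
  shift_mul : ∀ g h, b (g * h) = a g * b h + b g

namespace IsPosAffineAction

variable {G : Type*} [Group G] {a b : G → ℝ}

lemma slope_one (hG : IsPosAffineAction a b) : a 1 = 1 := by
  have h := hG.slope_mul 1 1
  rw [one_mul] at h
  exact (mul_eq_left₀ (hG.slope_pos 1).ne').mp h.symm

lemma shift_one (hG : IsPosAffineAction a b) : b 1 = 0 := by
  have h := hG.shift_mul 1 1
  rw [one_mul, hG.slope_one, one_mul] at h
  linarith

lemma slope_inv (hG : IsPosAffineAction a b) (g : G) : a g⁻¹ = (a g)⁻¹ := by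
  have h := hG.slope_mul g g⁻¹
  rw [mul_inv_cancel, hG.slope_one] at h
  exact eq_inv_of_mul_eq_one_right h.symm

lemma shift_inv (hG : IsPosAffineAction a b) (g : G) : b g⁻¹ = -b g / a g := by
  have h := hG.shift_mul g g⁻¹
  rw [mul_inv_cancel, hG.shift_one] at h
  rw [eq_div_iff (hG.slope_pos g).ne']
  linarith

def translations (hG : IsPosAffineAction a b) : AddSubgroup ℝ where
  carrier := {t | ∃ g, a g = 1 ∧ b g = t}
  zero_mem' := ⟨1, hG.slope_one, hG.shift_one⟩
  add_mem' := by
    rintro _ _ ⟨g, hg, rfl⟩ ⟨h, hh, rfl⟩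
    exact ⟨g * h, by rw [hG.slope_mul, hg, hh, one_mul],
      by rw [hG.shift_mul, hg, one_mul, add_comm]⟩
  neg_mem' := by
    rintro _ ⟨g, hg, rfl⟩
    exact ⟨g⁻¹, by rw [hG.slope_inv, hg, inv_one], by rw [hG.shift_inv, hg, div_one]⟩

lemma slope_mul_mem_translations (hG : IsPosAffineAction a b) (g : G) {t : ℝ}
    (ht : t ∈ hG.translations) : a g * t ∈ hG.translations := by
  obtain ⟨h, hh, rfl⟩ := ht
  refine ⟨g * h * g⁻¹, ?_, ?_⟩
  · rw [hG.slope_mul, hG.slope_mul, hG.slope_inv, hh, mul_one, mul_inv_cancel₀ (hG.slope_pos g).ne']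
  · rw [hG.shift_mul, hG.shift_mul, hG.slope_mul, hG.shift_inv, hh]
    field_simp [(hG.slope_pos g).ne']
    ring

lemma commutator_mem_translations (hG : IsPosAffineAction a b) (w g : G) :
    (a w - 1) * b g - (a g - 1) * b w ∈ hG.translations := by
  refine ⟨w * g * w⁻¹ * g⁻¹, ?_, ?_⟩
  · simp only [hG.slope_mul, hG.slope_inv]
    field_simp [(hG.slope_pos g).ne', (hG.slope_pos w).ne']
  · simp only [hG.shift_mul, hG.slope_mul, hG.slope_inv, hG.shift_inv]
    field_simp [(hG.slope_pos g).ne', (hG.slope_pos w).ne']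
    ring

lemma pow_mul_mem_translations (hG : IsPosAffineAction a b) (g : G) {t : ℝ}
    (ht : t ∈ hG.translations) (n : ℕ) : a g ^ n * t ∈ hG.translations := by
  induction n with
  | zero => rwa [pow_zero, one_mul]
  | succ n ih => rw [pow_succ', mul_assoc]; exact hG.slope_mul_mem_translations g ih

lemma exists_ne_zero_mem_translations (hG : IsPosAffineAction a b)
    (hfix : ¬∃ x : ℝ, ∀ w : G, a w * x + b w = x) {g : G} (hg : a g ≠ 1) :
    ∃ t ∈ hG.translations, t ≠ 0 := by
  by_contra! htriv
  have hg' : 1 - a g ≠ 0 := sub_ne_zero.mpr hg.symm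
  refine hfix ⟨b g / (1 - a g), fun w => ?_⟩
  have hcomm := htriv _ (hG.commutator_mem_translations w g)
  field_simp
  linear_combination hcomm

lemma exists_slope_lt_one (hG : IsPosAffineAction a b) (hg : ∃ g, a g ≠ 1) : ∃ g, a g < 1 := by
  obtain ⟨g, hg⟩ := hg
  rcases lt_or_gt_of_ne hg with hlt | hgt
  · exact ⟨g, hlt⟩
  · exact ⟨g⁻¹, by rw [hG.slope_inv]; exact inv_lt_one_of_one_lt₀ hgt⟩

lemma dense_translations_of_exists_slope_ne_one (hG : IsPosAffineAction a b)
    (hfix : ¬∃ x : ℝ, ∀ w : G, a w * x + b w = x) (hslope : ∃ g, a g ≠ 1) :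
    Dense (hG.translations : Set ℝ) := by
  obtain ⟨g, hg⟩ := hG.exists_slope_lt_one hslope
  obtain ⟨t, ht, ht0⟩ := hG.exists_ne_zero_mem_translations hfix hg.ne
  refine hG.translations.dense_of_exists_abs_lt fun ε hε => ?_
  obtain ⟨n, hn⟩ := exists_pow_lt_of_lt_one (div_pos hε (abs_pos.mpr ht0)) hg
  have hpow : 0 < a g ^ n := pow_pos (hG.slope_pos g) n
  refine ⟨a g ^ n * t, hG.pow_mul_mem_translations g ht n, mul_ne_zero hpow.ne' ht0, ?_⟩
  rw [abs_mul, abs_of_pos hpow]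
  exact (lt_div_iff₀ (abs_pos.mpr ht0)).mp hn

lemma dense_translations_of_accPt (hG : IsPosAffineAction a b) (hslope : ∀ g, a g = 1)
    {x₀ y : ℝ} (hy : AccPt y (𝓟 (range fun g => a g * x₀ + b g))) :
    Dense (hG.translations : Set ℝ) := by
  refine hG.translations.dense_of_exists_abs_lt fun ε hε => ?_
  obtain ⟨_, ⟨g₁, rfl⟩, _, ⟨g₂, rfl⟩, hne, hdist⟩ := Metric.exists_ne_dist_lt_of_accPt hy hε
  simp only [hslope, one_mul, Real.dist_eq, ne_eq, add_right_inj] at hne hdist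
  refine ⟨b g₁ - b g₂, hG.translations.sub_mem ⟨g₁, hslope g₁, rfl⟩ ⟨g₂, hslope g₂, rfl⟩,
    sub_ne_zero.mpr hne, ?_⟩
  simpa using hdist

lemma dense_orbit_of_dense_translations (hG : IsPosAffineAction a b)
    (hT : Dense (hG.translations : Set ℝ)) (x : ℝ) :
    Dense (range fun g => a g * x + b g) := by
  refine (hT.vadd x).mono ?_
  rintro _ ⟨t, ⟨g, hg, rfl⟩, rfl⟩
  exact ⟨g, by simp only [hg, one_mul, vadd_eq_add]⟩

end IsPosAffineAction

/-- If a group of affine transformations `x ↦ a g * x + b g` of ℝ with positive slopes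
has no global fixed point and some orbit has an accumulation point, then every orbit is
dense in ℝ. -/
theorem affine_orbit_dense {G : Type*} [Group G]
    (a b : G → ℝ) (ha : ∀ g : G, 0 < a g)
    (hmul_a : ∀ g h : G, a (g * h) = a g * a h)
    (hmul_b : ∀ g h : G, b (g * h) = a g * b h + b g)
    (hnofix : ¬ ∃ x : ℝ, ∀ g : G, a g * x + b g = x)
    (hacc : ∃ x₀ y : ℝ, AccPt y (𝓟 (Set.range fun g : G => a g * x₀ + b g))) :
    ∀ x : ℝ, Dense (Set.range fun g : G => a g * x + b g) := by
  have hG : IsPosAffineAction a b := ⟨ha, hmul_a, hmul_b⟩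
  have hT : Dense (hG.translations : Set ℝ) := by
    by_cases hslope : ∀ g, a g = 1
    · obtain ⟨x₀, y, hy⟩ := hacc
      exact hG.dense_translations_of_accPt hslope hy
    · push Not at hslope
      exact hG.dense_translations_of_exists_slope_ne_one hnofix hslope
  exact hG.dense_orbit_of_dense_translations hT
end

section
/- Let G be a group acting on the real line by order-preserving homeomorphisms via ρ₁, and let ρ₂ be another action of G on ℝ by order-preserving homeomorphisms. Suppose c : ℝ → ℝ is a continuous, non-decreasing, surjective map satisfying ρ₂(g) ∘ c = c ∘ ρ₁(g) for all g ∈ G. If there exists a nonzero Radon measure ν on ℝ invariant under the action ρ₂, then there exists a nonzero Radon measure μ on ℝ invariant under the action ρ₁. -/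
/-!
Write `ν = dF` for a Stieltjes function `F`. Since `c` is continuous and monotone, `F ∘ c` is
again a Stieltjes function, and its measure `μ` gives mass `ν (c a, c b]` to `(a, b]`.
Semiconjugacy then transports the invariance of `ν` to invariance of `μ` on half-open intervals,
which determine a locally finite measure; surjectivity of `c` keeps `μ` nonzero.
-/

open MeasureTheory

open Set Filter Topology

theorem isRadon_iff_isFiniteMeasureOnCompacts {μ : Measure ℝ} :
    IsRadon μ ↔ IsFiniteMeasureOnCompacts μ :=
  ⟨fun h => ⟨h⟩, fun _ _ hK => hK.measure_lt_top⟩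

namespace StieltjesFunction

variable {R S : Type*} [LinearOrder R] [TopologicalSpace R] [LinearOrder S] [TopologicalSpace S]

def comp (f : StieltjesFunction R) {c : S → R} (hc : Continuous c) (hmono : Monotone c) :
    StieltjesFunction S where
  toFun := f ∘ c
  mono' := f.mono.comp hmono
  right_continuous' x :=
    (f.right_continuous (c x)).comp hc.continuousWithinAt fun _ hy => hmono hy

theorem comp_measure_Ioc (f : StieltjesFunction ℝ) {c : ℝ → ℝ} (hc : Continuous c)
    (hmono : Monotone c) (a b : ℝ) :
    (f.comp hc hmono).measure (Ioc a b) = f.measure (Ioc (c a) (c b)) := by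
  simp only [measure_Ioc]
  rfl

end StieltjesFunction

namespace MeasureTheory

theorem tendsto_measure_Ioc_nhdsGT {μ : Measure ℝ} [IsLocallyFiniteMeasure μ] (y : ℝ) :
    Tendsto (fun t => μ (Ioc y t)) (𝓝[>] y) (𝓝 0) := by
  have hempty : ⋂ t > y, Ioc y t = ∅ :=
    eq_empty_of_forall_notMem fun x hx => by
      simp only [mem_iInter, mem_Ioc] at hx
      have hyx := (hx (y + 1) (by linarith)).1
      linarith [(hx ((y + x) / 2) (by linarith)).2]
  have := tendsto_measure_biInter_gt (μ := μ) (s := fun t => Ioc y t)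
    (fun _ _ => nullMeasurableSet_Ioc) (fun _ _ _ hst => Ioc_subset_Ioc_right hst)
    ⟨y + 1, by linarith, measure_Ioc_lt_top.ne⟩
  rwa [hempty, measure_empty] at this

namespace Measure

section DistributionFunction

variable (ν : Measure ℝ) [IsLocallyFiniteMeasure ν]

theorem integral_one_sub_integral_one {s t : ℝ} (hst : s ≤ t) :
    (∫ _ in 0..t, (1 : ℝ) ∂ν) - ∫ _ in 0..s, (1 : ℝ) ∂ν = ν.real (Ioc s t) := by
  rw [intervalIntegral.integral_interval_sub_left intervalIntegrable_const intervalIntegrable_const,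
    intervalIntegral.integral_const', Ioc_eq_empty (not_lt.2 hst)]
  simp

noncomputable def stieltjesFunction : StieltjesFunction ℝ where
  toFun y := ∫ _ in 0..y, (1 : ℝ) ∂ν
  mono' _ _ hst := sub_nonneg.1 <| (ν.integral_one_sub_integral_one hst).symm ▸ measureReal_nonneg
  right_continuous' y := by
    rw [← continuousWithinAt_Ioi_iff_Ici, ContinuousWithinAt]
    have hIoc := (ENNReal.tendsto_toReal ENNReal.zero_ne_top).comp
      (tendsto_measure_Ioc_nhdsGT (μ := ν) y)
    have hlim := (tendsto_const_nhds (x := ∫ _ in 0..y, (1 : ℝ) ∂ν)).add hIoc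
    rw [ENNReal.toReal_zero, add_zero] at hlim
    refine hlim.congr' (eventually_nhdsWithin_of_forall fun t ht => ?_)
    rw [Function.comp_apply, ← measureReal_def, ← ν.integral_one_sub_integral_one (le_of_lt ht)]
    ring

theorem stieltjesFunction_measure : ν.stieltjesFunction.measure = ν :=
  ext_of_Ioc _ _ fun _ _ hab => by
    rw [StieltjesFunction.measure_Ioc]
    exact (congrArg ENNReal.ofReal (ν.integral_one_sub_integral_one hab.le)).trans
      (ofReal_measureReal measure_Ioc_lt_top.ne)

end DistributionFunction

theorem map_orderIso_apply_Ioc (μ : Measure ℝ) (e : ℝ ≃o ℝ) (a b : ℝ) :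
    μ.map e (Ioc a b) = μ (Ioc (e.symm a) (e.symm b)) := by
  rw [map_apply e.continuous.measurable measurableSet_Ioc, e.preimage_Ioc]

section Pullback

variable {μ ν : Measure ℝ} {c : ℝ → ℝ}

theorem map_eq_self_of_semiconj [IsLocallyFiniteMeasure μ]
    (hμ : ∀ a b, μ (Ioc a b) = ν (Ioc (c a) (c b))) {e₁ e₂ : ℝ ≃o ℝ}
    (hsemi : Function.Semiconj c e₁ e₂) (hν : ν.map e₂ = ν) : μ.map e₁ = μ := by
  have hsymm : Function.Semiconj c e₁.symm e₂.symm :=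
    hsemi.inverses_right e₁.apply_symm_apply e₂.symm_apply_apply
  refine (ext_of_Ioc μ _ fun a b _ => ?_).symm
  rw [map_orderIso_apply_Ioc, hμ (e₁.symm a), hsymm.eq, hsymm.eq, ← map_orderIso_apply_Ioc, hν,
    hμ]

theorem ne_zero_of_surjective [IsLocallyFiniteMeasure ν]
    (hμ : ∀ a b, μ (Ioc a b) = ν (Ioc (c a) (c b))) (hsurj : Function.Surjective c)
    (hν : ν ≠ 0) : μ ≠ 0 := by
  rintro rfl
  refine hν (ext_of_Ioc ν 0 fun s t _ => ?_)
  obtain ⟨a, rfl⟩ := hsurj s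
  obtain ⟨b, rfl⟩ := hsurj t
  rw [← hμ]
  rfl

end Pullback

end Measure

end MeasureTheory

/-- If an action `ρ₁` of `G` on the line by order-preserving homeomorphisms is
semi-conjugate, via a continuous non-decreasing surjection `c`, to an action `ρ₂`
preserving a nonzero Radon measure, then `ρ₁` also preserves a nonzero Radon measure. -/
theorem pullback_invariant_measure {G : Type*} [Group G]
    (ρ₁ ρ₂ : G →* (ℝ ≃o ℝ))
    (c : ℝ → ℝ) (hcont : Continuous c) (hmono : Monotone c)
    (hsurj : Function.Surjective c)
    (hsemi : ∀ (g : G) (x : ℝ), ρ₂ g (c x) = c (ρ₁ g x))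
    (ν : Measure ℝ) (hν : ν ≠ 0) (hνrad : IsRadon ν)
    (hνinv : ∀ g : G, Measure.map (⇑(ρ₂ g)) ν = ν) :
    ∃ μ : Measure ℝ, μ ≠ 0 ∧ IsRadon μ ∧
      ∀ g : G, Measure.map (⇑(ρ₁ g)) μ = μ := by
  have := isRadon_iff_isFiniteMeasureOnCompacts.mp hνrad
  set μ := (ν.stieltjesFunction.comp hcont hmono).measure
  have hμ : ∀ a b, μ (Ioc a b) = ν (Ioc (c a) (c b)) := fun a b => by
    rw [StieltjesFunction.comp_measure_Ioc, ν.stieltjesFunction_measure]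
  exact ⟨μ, Measure.ne_zero_of_surjective hμ hsurj hν,
    isRadon_iff_isFiniteMeasureOnCompacts.mpr inferInstance,
    fun g => Measure.map_eq_self_of_semiconj hμ (fun x => (hsemi g x).symm) (hνinv g)⟩
end
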